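/- arXiv:2604.06396 — 14 statements merged into one kernel-verified Lean document; each statement's English description precedes it below -/
import Mathlib

section
/- In a one-to-one school choice problem (each school has unit capacity), any matching that Pareto-dominates the student-optimal stable matching (the DA outcome) must violate the priority of at least one student. -/
/-- A one-to-one school choice problem. `rank i o` is student `i`'s rank of option `o`
(lower is better, `none` = unassigned); `prio s i` is student `i`'s priority rank at
school `s` (lower is better). Strictness of preferences/priorities = injectivity. -/
structure SchoolChoice (I S : Type*) where
  rank : I → Option S → ℕ
  rank_inj : ∀ i, Function.Injective (rank i)
  prio : S → I → ℕ
  prio_inj : ∀ s, Function.Injective (prio s)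

namespace SchoolChoice

variable {I S : Type*} (P : SchoolChoice I S)

/-- `μ` is a (one-to-one) matching: no school receives two students. -/
def IsMatching (_P : SchoolChoice I S) (μ : I → Option S) : Prop :=
  ∀ i j s, μ i = some s → μ j = some s → i = j

/-- `μ` weakly Pareto-dominates `ν`: every student weakly prefers `μ`. -/
def WeakDom (μ ν : I → Option S) : Prop :=
  ∀ i, P.rank i (μ i) ≤ P.rank i (ν i)

/-- `μ` Pareto-dominates `ν`. -/
def Dom (μ ν : I → Option S) : Prop :=
  P.WeakDom μ ν ∧ ∃ i, P.rank i (μ i) < P.rank i (ν i)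

/-- Student `h`'s priority is violated under `μ`: some student `j` holds a school `s`
that `h` prefers to her own assignment while `h` has higher priority at `s`. -/
def Violates (μ : I → Option S) (h : I) : Prop :=
  ∃ j s, μ j = some s ∧ P.rank h (some s) < P.rank h (μ h) ∧ P.prio s h < P.prio s j

/-- Non-wastefulness: an empty school is preferred by nobody to her own assignment. -/
def NonWasteful (μ : I → Option S) : Prop :=
  ∀ s, (∀ j, μ j ≠ some s) → ∀ i, P.rank i (μ i) ≤ P.rank i (some s)

/-- Individual rationality (the null school has unlimited capacity). -/
def IndRational (μ : I → Option S) : Prop :=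
  ∀ i, P.rank i (μ i) ≤ P.rank i none

/-- Stability: matching, individually rational, non-wasteful, no priority violation. -/
def Stable (μ : I → Option S) : Prop :=
  P.IsMatching μ ∧ P.IndRational μ ∧ P.NonWasteful μ ∧ ∀ h, ¬ P.Violates μ h

def ParetoEfficient (μ : I → Option S) : Prop :=
  ∀ ν, P.IsMatching ν → ¬ P.Dom ν μ

/-- Student `i` is improvable relative to `da`: some matching weakly Pareto-dominating
`da` gives `i` a strictly preferred assignment. -/
def Improvable (da : I → Option S) (i : I) : Prop :=
  ∃ μ, P.IsMatching μ ∧ P.WeakDom μ da ∧ P.rank i (μ i) < P.rank i (da i)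

/-- Envy digraph of `da`: `i → j` iff `i` strictly prefers `da j` to `da i`. -/
def Envy (da : I → Option S) (i j : I) : Prop :=
  P.rank i (da j) < P.rank i (da i)

/-- Beneficiaries of `μ` relative to `da`. -/
def Benef (da μ : I → Option S) : Set I :=
  {i | P.rank i (μ i) < P.rank i (da i)}

/-- `μ` is justifiable (relative to `da`): every priority violation is against a
student who is unimprovable or a beneficiary of `μ`. -/
def Justifiable (da μ : I → Option S) : Prop :=
  ∀ h, P.Violates μ h → ¬ P.Improvable da h ∨ h ∈ P.Benef da μ

end SchoolChoice


/-- any matching Pareto-dominating the student-optimal stable matching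
(the DA outcome) must violate some student's priority. -/
theorem stmt0 {I S : Type*} [Fintype I] [Fintype S] (P : SchoolChoice I S)
    (da : I → Option S) (hda : P.Stable da)
    (hopt : ∀ ν, P.Stable ν → P.WeakDom da ν)
    (μ : I → Option S) (hμ : P.IsMatching μ) (hdom : P.Dom μ da) :
    ∃ h, P.Violates μ h := by
  by_contra hno
  push_neg at hno
  obtain ⟨hwd, i₀, hi₀⟩ := hdom
  suffices key : ∀ n (ν : I → Option S), (∑ i, P.rank i (ν i)) ≤ n → P.IsMatching ν →
      P.WeakDom ν da → (∀ h, ¬ P.Violates ν h) →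
      P.rank i₀ (ν i₀) < P.rank i₀ (da i₀) → False from
    key _ μ le_rfl hμ hwd (fun h hv => (hno h) hv) hi₀
  classical
  intro n
  induction n using Nat.strong_induction_on with
  | _ n IH =>
  intro ν hsum hm hwd' hnov hstrict
  by_cases hw : P.NonWasteful ν
  · have hstab : P.Stable ν :=
      ⟨hm, fun i => (hwd' i).trans (hda.2.1 i), hw, hnov⟩
    exact absurd (hopt ν hstab i₀) (not_le.2 hstrict)
  · simp only [SchoolChoice.NonWasteful, not_forall, not_le] at hw
    obtain ⟨s, hs, i1, hi1⟩ := hw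
    have hT : (Finset.univ.filter
        (fun i => P.rank i (some s) < P.rank i (ν i))).Nonempty :=
      ⟨i1, by simp [hi1]⟩
    obtain ⟨i, hiT, hmin⟩ := Finset.exists_min_image _ (P.prio s) hT
    have hiT' : P.rank i (some s) < P.rank i (ν i) := by
      simpa using hiT
    set ν' : I → Option S := Function.update ν i (some s) with hν'
    have hν'i : ν' i = some s := by simp [hν']
    have hν'ne : ∀ j, j ≠ i → ν' j = ν j := fun j hj =>
      Function.update_of_ne hj _ _
    -- sum strictly decreases
    have hle : ∀ j ∈ Finset.univ, P.rank j (ν' j) ≤ P.rank j (ν j) := by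
      intro j _
      by_cases hj : j = i
      · subst hj; rw [hν'i]; exact hiT'.le
      · rw [hν'ne j hj]
    have hlt : ∑ j, P.rank j (ν' j) < ∑ j, P.rank j (ν j) :=
      Finset.sum_lt_sum hle ⟨i, Finset.mem_univ i, by rw [hν'i]; exact hiT'⟩
    -- apply IH
    refine IH (∑ j, P.rank j (ν' j)) (lt_of_lt_of_le hlt hsum) ν' le_rfl ?_ ?_ ?_ ?_
    · -- matching
      intro a b t ha hb
      by_cases hai : a = i
      · by_cases hbi : b = i
        · rw [hai, hbi]
        · subst hai; rw [hν'i] at ha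
          rw [hν'ne b hbi] at hb
          exact absurd hb (by rw [← ha]; exact hs b)
      · by_cases hbi : b = i
        · subst hbi; rw [hν'i] at hb
          rw [hν'ne a hai] at ha
          exact absurd ha (by rw [← hb]; exact hs a)
        · rw [hν'ne a hai] at ha; rw [hν'ne b hbi] at hb
          exact hm a b t ha hb
    · -- WeakDom ν' da
      intro j
      by_cases hj : j = i
      · rw [hj, hν'i]; exact hiT'.le.trans (hwd' i)
      · rw [hν'ne j hj]; exact hwd' j
    · -- no violations
      rintro h ⟨j, t, hjt, hpref, hprio⟩
      by_cases hji : j = i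
      · have hts : some t = some s := by rw [← hjt, hji, hν'i]
        obtain rfl : t = s := Option.some.inj hts
        rw [hji] at hprio
        have hhi : h ≠ i := fun e => lt_irrefl _ (e ▸ hprio)
        rw [hν'ne h hhi] at hpref
        exact absurd hprio (not_lt.2 (hmin h (by simp [hpref])))
      · rw [hν'ne j hji] at hjt
        by_cases hhi : h = i
        · subst hhi
          rw [hν'i] at hpref
          exact hnov h ⟨j, t, hjt, hpref.trans hiT', hprio⟩
        · rw [hν'ne h hhi] at hpref
          exact hnov h ⟨j, t, hjt, hpref, hprio⟩
    · -- strict witness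
      by_cases hj : i₀ = i
      · subst hj; rw [hν'i]; exact hiT'.trans_le (hwd' _)
      · rw [hν'ne i₀ hj]; exact hstrict
end

section
/- Let G be a finite directed graph whose vertex set is the set of students, with an edge i → j whenever student i strictly prefers the DA assignment of j to her own DA assignment. If a matching μ Pareto-dominates the DA matching and is obtained by a permutation of DA assignments among a set of students, then the permutation decomposes into vertex-disjoint directed cycles of G, and conversely, executing any collection of vertex-disjoint directed cycles of G (each student on a cycle receiving the DA school of her successor) yields a matching that Pareto-dominates the DA matching. -/
/-- a Pareto improvement over DA obtained by permuting DA assignments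
decomposes into vertex-disjoint cycles of the envy digraph (every nontrivially moved
student points to her successor along an envy edge), and, conversely, executing any
collection of vertex-disjoint envy cycles (encoded by a permutation all of whose
non-fixed points lie on envy edges) yields a matching Pareto-dominating DA. -/
theorem stmt1 {I S : Type*} [Fintype I] [Fintype S] (P : SchoolChoice I S)
    (da : I → Option S) (hda : P.Stable da) :
    (∀ (μ : I → Option S) (σ : Equiv.Perm I),
        P.IsMatching μ → P.Dom μ da → (∀ i, μ i = da (σ i)) →
        (∀ i, σ i ≠ i → μ i ≠ da i) →
        ∀ i, σ i ≠ i → P.Envy da i (σ i)) ∧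
    (∀ σ : Equiv.Perm I, (∀ i, σ i ≠ i → P.Envy da i (σ i)) → (∃ i, σ i ≠ i) →
        P.Dom (fun i => da (σ i)) da) := by
  constructor
  · intro μ σ hμ hdom hperm hne i hi
    have h1 : P.rank i (μ i) ≤ P.rank i (da i) := hdom.1 i
    have h2 : μ i ≠ da i := hne i hi
    have : P.rank i (μ i) ≠ P.rank i (da i) := fun h => h2 (P.rank_inj i h)
    have := lt_of_le_of_ne h1 this
    unfold SchoolChoice.Envy
    rw [← hperm i]
    exact this
  · intro σ henvy ⟨i, hi⟩
    constructor
    · intro j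
      by_cases h : σ j = j
      · simp only []
        rw [h]
      · exact le_of_lt (henvy j h)
    · exact ⟨i, henvy i hi⟩
end

section
/- A student is improvable (i.e., receives a strictly better school than her DA assignment in some matching Pareto-dominating DA) if and only if her vertex lies on a directed cycle of the DA envy digraph, which holds if and only if her vertex belongs to a non-trivial strongly connected component of the DA envy digraph. -/
private lemma walk_of_transGen {α : Type*} {r : α → α → Prop} {a b : α}
    (h : Relation.TransGen r a b) :
    ∃ n, 0 < n ∧ ∃ f : ℕ → α, f 0 = a ∧ f n = b ∧ ∀ k < n, r (f k) (f (k + 1)) := by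
  induction h with
  | @single c hab =>
    refine ⟨1, one_pos, fun k => if k = 0 then a else c, by simp, by simp, ?_⟩
    intro k hk
    interval_cases k
    simpa using hab
  | @tail b c hab hbc ih =>
    obtain ⟨n, hn, f, hf0, hfn, hedge⟩ := ih
    refine ⟨n + 1, Nat.succ_pos n, fun k => if k ≤ n then f k else c, by simp [hf0], by simp, ?_⟩
    intro k hk
    show r (if k ≤ n then f k else c) (if k + 1 ≤ n then f (k + 1) else c)
    rcases lt_or_eq_of_le (Nat.lt_succ_iff.mp hk) with h | h
    · rw [if_pos (le_of_lt h), if_pos (Nat.succ_le_of_lt h)]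
      exact hedge k h
    · subst h
      rw [if_pos le_rfl, if_neg (by omega : ¬ k + 1 ≤ k), hfn]
      exact hbc

private lemma cycle_perm_of_transGen {α : Type*} [Fintype α] {r : α → α → Prop} {a : α}
    (h : Relation.TransGen r a a) :
    ∃ π : Equiv.Perm α, r a (π a) ∧ ∀ x, π x ≠ x → r x (π x) := by
  classical
  have hQ : ∃ n, 0 < n ∧ ∃ f : ℕ → α, f 0 = a ∧ f n = a ∧ ∀ k < n, r (f k) (f (k + 1)) :=
    walk_of_transGen h
  have hwalk : ∃ n, 0 < n ∧ ∃ f : ℕ → α, f 0 = a ∧ f n = a ∧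
      (∀ k < n, r (f k) (f (k + 1))) ∧
      ∀ p q, p < q → q ≤ n → f p = f q → p = 0 ∧ q = n := by
    obtain ⟨hpos, f, hf0, hfn, hedge⟩ := Nat.find_spec hQ
    refine ⟨Nat.find hQ, hpos, f, hf0, hfn, hedge, ?_⟩
    set n₀ := Nat.find hQ with hn₀
    intro p q hpq hqn hfpq
    by_contra hcon
    have hlt : p + (n₀ - q) < n₀ := by omega
    refine Nat.find_min hQ hlt ⟨by omega, fun k => if k ≤ p then f k else f (k + (q - p)), ?_, ?_, ?_⟩
    · simp [hf0]
    · show (if p + (n₀ - q) ≤ p then f (p + (n₀ - q)) else f (p + (n₀ - q) + (q - p))) = a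
      by_cases hle : p + (n₀ - q) ≤ p
      · rw [if_pos hle, show p + (n₀ - q) = p by omega, hfpq, show q = n₀ by omega, hfn]
      · rw [if_neg hle, show p + (n₀ - q) + (q - p) = n₀ by omega, hfn]
    · intro k hk
      show r (if k ≤ p then f k else f (k + (q - p))) (if k + 1 ≤ p then f (k + 1) else f (k + 1 + (q - p)))
      by_cases h1 : k + 1 ≤ p
      · rw [if_pos (by omega : k ≤ p), if_pos h1]
        exact hedge k (by omega)
      · by_cases h2 : k ≤ p
        · rw [if_pos h2, if_neg h1, show k = p from by omega, hfpq,
            show p + 1 + (q - p) = q + 1 by omega]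
          exact hedge q (by omega)
        · rw [if_neg h2, if_neg h1, show k + 1 + (q - p) = k + (q - p) + 1 by omega]
          exact hedge (k + (q - p)) (by omega)
  obtain ⟨n, hpos, f, hf0, hfn, hedge, hinj⟩ := hwalk
  obtain ⟨m, rfl⟩ := Nat.exists_eq_succ_of_ne_zero hpos.ne'
  have hFinj : Function.Injective (fun k : Fin (m + 1) => f k.val) := by
    intro p q hpq
    rcases lt_trichotomy p.val q.val with hl | hl | hl
    · exact absurd (hinj p.val q.val hl (le_of_lt q.isLt) hpq).2 (Nat.ne_of_lt q.isLt)
    · exact Fin.ext hl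
    · exact absurd (hinj q.val p.val hl (le_of_lt p.isLt) hpq.symm).2 (Nat.ne_of_lt p.isLt)
  set F : Fin (m + 1) ↪ α := ⟨fun k => f k.val, hFinj⟩ with hF
  set π := (finRotate (m + 1)).viaFintypeEmbedding F with hπ
  have hstep : ∀ k : Fin (m + 1), π (f k.val) = f (k.val + 1) := by
    intro k
    have h1 : π (F k) = F (finRotate (m + 1) k) :=
      Equiv.Perm.viaFintypeEmbedding_apply_image _ _ k
    have h2 : f ((finRotate (m + 1) k).val) = f (k.val + 1) := by
      rcases eq_or_ne k (Fin.last m) with hk | hk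
      · rw [coe_finRotate, if_pos hk, hf0, hk, Fin.val_last, ← hfn]
      · rw [coe_finRotate_of_ne_last hk]
    exact h1.trans h2
  have hedge' : ∀ k : Fin (m + 1), r (f k.val) (f (k.val + 1)) := fun k => hedge k.val k.isLt
  refine ⟨π, ?_, ?_⟩
  · have h0 := hstep 0
    have h0' := hedge' 0
    simp only [Fin.val_zero] at h0 h0'
    rw [← hf0, h0]
    exact h0'
  · intro x hx
    by_cases hxr : x ∈ Set.range F
    · obtain ⟨k, rfl⟩ := hxr
      show r (f k.val) (π (F k))
      rw [show π (F k) = π (f k.val) from rfl, hstep k]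
      exact hedge' k
    · exact absurd (Equiv.Perm.viaFintypeEmbedding_apply_notMem_range _ _ hxr) hx

/-- a student is improvable iff she lies on a directed cycle of the DA
envy digraph (`Relation.TransGen` from `i` to itself) iff she belongs to a
non-trivial strongly connected component of the envy digraph. -/
theorem stmt2 {I S : Type*} [Fintype I] [Fintype S] (P : SchoolChoice I S)
    (da : I → Option S) (hda : P.Stable da) (i : I) :
    (P.Improvable da i ↔ Relation.TransGen (P.Envy da) i i) ∧
    (Relation.TransGen (P.Envy da) i i ↔
      ∃ j, j ≠ i ∧ Relation.ReflTransGen (P.Envy da) i j ∧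
        Relation.ReflTransGen (P.Envy da) j i) := by
  classical
  obtain ⟨hdam, hdair, hdanw, _⟩ := hda
  have henvy_irrefl : ∀ x, ¬ P.Envy da x x := fun x hx => lt_irrefl _ hx
  constructor
  · constructor
    · -- Improvable → cycle
      rintro ⟨μ, hμ, hwd, hi⟩
      set B : Set I := {j | P.rank j (μ j) < P.rank j (da j)} with hB
      have hsome : ∀ j ∈ B, ∃ s, μ j = some s := by
        intro j hj
        cases hμj : μ j with
        | none =>
          exfalso
          have h1 : P.rank j (μ j) < P.rank j none := lt_of_lt_of_le hj (hdair j)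
          rw [hμj] at h1
          exact lt_irrefl _ h1
        | some s => exact ⟨s, rfl⟩
      have key : ∀ j : ↥B, ∃ k : ↥B, da k.1 = μ j.1 ∧ P.Envy da j.1 k.1 := by
        rintro ⟨j, hj⟩
        obtain ⟨s, hs⟩ := hsome j hj
        have hocc : ∃ k, da k = some s := by
          by_contra hemp
          push_neg at hemp
          have h1 := hdanw s hemp j
          rw [← hs] at h1
          exact absurd hj (not_lt.2 h1)
        obtain ⟨k, hk⟩ := hocc
        have henvy : P.Envy da j k := by
          show P.rank j (da k) < P.rank j (da j)
          rw [hk, ← hs]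
          exact hj
        have hkB : k ∈ B := by
          refine lt_of_le_of_ne (hwd k) (fun heq => ?_)
          have hμk : μ k = da k := P.rank_inj k heq
          have hμks : μ k = some s := by rw [hμk, hk]
          have hkj : k = j := hμ k j s hμks hs
          rw [hkj] at hk
          have : P.rank j (μ j) < P.rank j (μ j) := by
            conv_rhs => rw [hs, ← hk]
            exact hj
          exact lt_irrefl _ this
        exact ⟨⟨k, hkB⟩, by rw [hk, hs], henvy⟩
      choose σ hσda hσenvy using key
      have hiB : i ∈ B := hi
      have hσinj : Function.Injective σ := by
        intro x y hxy
        obtain ⟨s, hsx⟩ := hsome x.1 x.2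
        have hsy : μ y.1 = some s := by
          rw [← hσda y, ← hxy, hσda x]
          exact hsx
        exact Subtype.ext (hμ x.1 y.1 s hsx hsy)
      haveI : Finite ↥B := Subtype.finite
      obtain ⟨m1, m2, hne, heq⟩ :=
        Finite.exists_ne_map_eq_of_infinite (fun m : ℕ => σ^[m] ⟨i, hiB⟩)
      have hT : ∀ d (y : ↥B), Relation.TransGen (P.Envy da) y.1 (σ^[d + 1] y).1 := by
        intro d
        induction d with
        | zero => intro y; exact Relation.TransGen.single (hσenvy y)
        | succ d ih =>
          intro y
          rw [Function.iterate_succ_apply']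
          exact (ih y).tail (hσenvy _)
      have hcyc : ∃ d, 0 < d ∧ σ^[d] (⟨i, hiB⟩ : ↥B) = ⟨i, hiB⟩ := by
        rcases hne.lt_or_gt with hlt | hlt
        · refine ⟨m2 - m1, by omega, (hσinj.iterate m1) ?_⟩
          rw [← Function.iterate_add_apply, show m1 + (m2 - m1) = m2 by omega]
          exact heq.symm
        · refine ⟨m1 - m2, by omega, (hσinj.iterate m2) ?_⟩
          rw [← Function.iterate_add_apply, show m2 + (m1 - m2) = m1 by omega]
          exact heq
      obtain ⟨d, hd, hfix⟩ := hcyc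
      have := hT (d - 1) ⟨i, hiB⟩
      rw [show d - 1 + 1 = d by omega, hfix] at this
      exact this
    · -- cycle → Improvable
      intro h
      obtain ⟨π, hπi, hπ⟩ := cycle_perm_of_transGen h
      refine ⟨fun x => da (π x), ?_, ?_, hπi⟩
      · intro x y s hx hy
        exact π.injective (hdam (π x) (π y) s hx hy)
      · intro x
        by_cases hx : π x = x
        · show P.rank x (da (π x)) ≤ P.rank x (da x)
          rw [hx]
        · exact le_of_lt (hπ x hx)
  · constructor
    · intro h
      obtain ⟨j, hij, hji⟩ := (Relation.TransGen.head'_iff).mp h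
      refine ⟨j, fun hji' => henvy_irrefl i (hji' ▸ hij), Relation.ReflTransGen.single hij, hji⟩
    · rintro ⟨j, hne, hij, hji⟩
      rcases Relation.ReflTransGen.cases_head hij with heq | ⟨c, hic, hcj⟩
      · exact absurd heq.symm hne
      · exact Relation.TransGen.head' hic (hcj.trans hji)
end

section
/- Let Π be a cycle packing in the DA envy digraph with induced matching μ^Π. Then μ^Π is justifiable if and only if every student appearing in the label of some edge of Π is a beneficiary of μ^Π, i.e., l(Π) ⊆ B(μ^Π). -/
/-- a matching induced by a cycle packing `σ` in the DA envy digraph is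
justifiable iff the union of the labels of its edges is contained in its set of
beneficiaries. (Improvable students = students on a cycle of the envy digraph.) -/
theorem stmt3 {I S : Type*} [Fintype I] [Fintype S] (P : SchoolChoice I S)
    (da : I → Option S) (hda : P.Stable da)
    (σ : Equiv.Perm I) (hcyc : ∀ i, σ i ≠ i → P.Envy da i (σ i))
    (μ : I → Option S) (hμ : ∀ i, μ i = da (σ i))
    (Imp : I → Prop) (hImp : ∀ h, Imp h ↔ Relation.TransGen (P.Envy da) h h)
    (label : Set I)
    (hlabel : ∀ h, h ∈ label ↔ ∃ i s, σ i ≠ i ∧ da (σ i) = some s ∧ Imp h ∧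
        P.rank h (some s) < P.rank h (da h) ∧ P.prio s h < P.prio s i) :
    (∀ h, P.Violates μ h → ¬ Imp h ∨ h ∈ P.Benef da μ) ↔ label ⊆ P.Benef da μ := by
  constructor
  · intro hJ h hhl
    obtain ⟨i, s, hσi, hds, hImph, hr, hp⟩ := (hlabel h).mp hhl
    by_cases hb : P.rank h (μ h) ≤ P.rank h (some s)
    · exact lt_of_le_of_lt hb hr
    · push_neg at hb
      have hv : P.Violates μ h := ⟨i, s, by rw [hμ]; exact hds, hb, hp⟩
      rcases hJ h hv with h1 | h2
      · exact absurd hImph h1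
      · exact h2
  · intro hL h hv
    by_cases hImph : Imp h
    · right
      by_cases hσh : σ h = h
      · obtain ⟨j, s, hjs, hr, hp⟩ := hv
        have hμh : μ h = da h := by rw [hμ, hσh]
        rw [hμh] at hr
        by_cases hσj : σ j = j
        · exfalso
          refine hda.2.2.2 h ⟨j, s, ?_, hr, hp⟩
          rw [← hσj, ← hμ]; exact hjs
        · exact hL ((hlabel h).mpr ⟨j, s, hσj, by rw [← hμ]; exact hjs, hImph, hr, hp⟩)
      · show P.rank h (μ h) < P.rank h (da h)
        rw [hμ]; exact hcyc h hσh
    · left; exact hImph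
end

section
/- If the DA outcome of a school choice problem is Pareto-inefficient, then there exists a matching that Pareto-dominates the DA outcome and in which every priority violation is against an unimprovable student (i.e., there exists a strongly justifiable improvement). -/
namespace SchoolChoice

section Aux

variable {I S : Type*} [Fintype I] [Fintype S]

/-- Counting lemma: any matching weakly dominating a stable matching uses exactly the
same schools, and keeps the same set of assigned students. -/
lemma counting_aux (P : SchoolChoice I S) (da : I → Option S) (hda : P.Stable da)
    (ν : I → Option S) (hm : P.IsMatching ν) (hw : P.WeakDom ν da) :
    (∀ v s, da v = some s → ∃ w, ν w = some s) ∧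
    (∀ v, P.rank v (ν v) < P.rank v (da v) → da v ≠ none) := by
  classical
  obtain ⟨hmda, hir, hnw, -⟩ := hda
  have L2 : ∀ i s', ν i = some s' → ∃ u, da u = some s' := by
    intro i s' hi
    by_contra hno
    push_neg at hno
    have h1 : P.rank i (da i) ≤ P.rank i (some s') := hnw s' hno i
    have h2 : P.rank i (ν i) ≤ P.rank i (da i) := hw i
    rw [hi] at h2
    exact hno i (P.rank_inj i (le_antisymm h1 h2))
  set Bda : Finset I := Finset.univ.filter (fun i => da i ≠ none) with hBda
  set Bnu : Finset I := Finset.univ.filter (fun i => ν i ≠ none) with hBnu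
  have hsub : Bda ⊆ Bnu := by
    intro i hi
    simp only [hBda, hBnu, Finset.mem_filter, Finset.mem_univ, true_and] at *
    intro hni
    have h2 : P.rank i (ν i) ≤ P.rank i (da i) := hw i
    have h3 : P.rank i (da i) ≤ P.rank i none := hir i
    rw [hni] at h2
    exact hi (P.rank_inj i (le_antisymm h3 h2))
  set ψ : I → I := fun i => if h : ∃ u, da u = ν i then Classical.choose h else i with hψ
  have hψ2 : ∀ i ∈ Bnu, da (ψ i) = ν i := by
    intro i hi
    simp only [hBnu, Finset.mem_filter, Finset.mem_univ, true_and] at hi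
    obtain ⟨s', hs'⟩ := Option.ne_none_iff_exists'.mp hi
    have hex : ∃ u, da u = ν i := by
      obtain ⟨u, hu⟩ := L2 i s' hs'
      exact ⟨u, by rw [hu, hs']⟩
    simp only [hψ, dif_pos hex]
    exact Classical.choose_spec hex
  have hinj : Set.InjOn ψ Bnu := by
    intro i hi i' hi' he
    have hi2 : i ∈ Bnu := Finset.mem_coe.mp hi
    have hi2' : i' ∈ Bnu := Finset.mem_coe.mp hi'
    have e1 := hψ2 i hi2
    have e2 := hψ2 i' hi2'
    rw [he, e2] at e1
    simp only [hBnu, Finset.mem_filter, Finset.mem_univ, true_and] at hi2'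
    obtain ⟨s', hs'⟩ := Option.ne_none_iff_exists'.mp hi2'
    exact (hm i' i s' hs' (by rw [← e1, hs'])).symm
  have hmaps : ∀ i ∈ Bnu, ψ i ∈ Bda := by
    intro i hi
    simp only [hBda, Finset.mem_filter, Finset.mem_univ, true_and]
    rw [hψ2 i hi]
    simp only [hBnu, Finset.mem_filter, Finset.mem_univ, true_and] at hi
    exact hi
  constructor
  · intro v s hvs
    by_contra hno
    push_neg at hno
    have hvB : v ∈ Bda := by
      simp only [hBda, Finset.mem_filter, Finset.mem_univ, true_and]
      rw [hvs]; exact Option.some_ne_none s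
    have hmaps' : ∀ i ∈ Bnu, ψ i ∈ Bda.erase v := by
      intro i hi
      refine Finset.mem_erase.mpr ⟨?_, hmaps i hi⟩
      intro he
      have := hψ2 i hi
      rw [he, hvs] at this
      exact hno i this.symm
    have c1 : Bnu.card ≤ (Bda.erase v).card :=
      Finset.card_le_card_of_injOn ψ hmaps' hinj
    have c2 : (Bda.erase v).card < Bda.card := Finset.card_erase_lt_of_mem hvB
    have c3 : Bda.card ≤ Bnu.card := Finset.card_le_card hsub
    omega
  · intro v hlt hvn
    have hνv : ν v ≠ none := by
      intro hne
      rw [hne, hvn] at hlt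
      exact lt_irrefl _ hlt
    have hvBnu : v ∈ Bnu := by
      simp only [hBnu, Finset.mem_filter, Finset.mem_univ, true_and]; exact hνv
    have hvBda : v ∉ Bda := by
      simp only [hBda, Finset.mem_filter, Finset.mem_univ, true_and, not_not]; exact hvn
    have c1 : Bnu.card ≤ Bda.card := Finset.card_le_card_of_injOn ψ hmaps hinj
    have c2 : Bda.card < Bnu.card :=
      Finset.card_lt_card ((Finset.ssubset_iff_of_subset hsub).mpr ⟨v, hvBnu, hvBda⟩)
    omega

/-- Key lemma: every improvable student `v` is assigned, and has an improvable envier of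
minimal priority at `v`'s school. -/
lemma key2 (P : SchoolChoice I S) (da : I → Option S) (hda : P.Stable da)
    (v : I) (hv : P.Improvable da v) :
    ∃ h, P.Improvable da h ∧ P.Envy da h v ∧
      ∀ s, da v = some s → ∀ h', P.Improvable da h' → P.Envy da h' v →
        P.prio s h ≤ P.prio s h' := by
  classical
  obtain ⟨ν, hm, hw, hs⟩ := hv
  obtain ⟨LA, LB⟩ := counting_aux P da hda ν hm hw
  obtain ⟨s, hsv⟩ := Option.ne_none_iff_exists'.mp (LB v hs)
  obtain ⟨w, hwν⟩ := LA v s hsv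
  have hwv : w ≠ v := by
    intro he
    subst he
    rw [hwν, hsv] at hs
    exact lt_irrefl _ hs
  have hνwda : ν w ≠ da w := by
    intro he
    rw [he] at hwν
    exact hwv (hda.1 w v s hwν hsv)
  have hstrict : P.rank w (ν w) < P.rank w (da w) :=
    lt_of_le_of_ne (hw w) (fun he => hνwda (P.rank_inj w he))
  have hImpw : P.Improvable da w := ⟨ν, hm, hw, hstrict⟩
  have hEnvyw : P.Envy da w v := by
    show P.rank w (da v) < P.rank w (da w)
    rw [hsv, ← hwν]
    exact hstrict
  obtain ⟨h₀, h₀F, h₀min⟩ :=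
    Finset.exists_min_image
      (Finset.univ.filter (fun h => P.Improvable da h ∧ P.Envy da h v))
      (fun h => P.prio s h)
      ⟨w, by simp only [Finset.mem_filter, Finset.mem_univ, true_and]; exact ⟨hImpw, hEnvyw⟩⟩
  simp only [Finset.mem_filter, Finset.mem_univ, true_and] at h₀F
  refine ⟨h₀, h₀F.1, h₀F.2, ?_⟩
  intro s' hs' h' hi' he'
  have hss : s' = s := by rw [hsv] at hs'; exact (Option.some_inj.mp hs').symm
  subst hss
  exact h₀min h' (by simp only [Finset.mem_filter, Finset.mem_univ, true_and]; exact ⟨hi', he'⟩)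

end Aux

end SchoolChoice



/-- if the DA outcome (the student-optimal stable matching) is
Pareto-inefficient, there exists a strongly justifiable improvement: a matching
Pareto-dominating DA all of whose priority violations are against unimprovable
students. -/
theorem stmt4 {I S : Type*} [Fintype I] [Fintype S] (P : SchoolChoice I S)
    (da : I → Option S) (hda : P.Stable da)
    (hopt : ∀ ν, P.Stable ν → P.WeakDom da ν)
    (hineff : ¬ P.ParetoEfficient da) :
    ∃ μ, P.IsMatching μ ∧ P.Dom μ da ∧
      ∀ h, P.Violates μ h → ¬ P.Improvable da h := by
  classical
  rw [SchoolChoice.ParetoEfficient] at hineff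
  push_neg at hineff
  obtain ⟨ν₀, hν₀m, hν₀d⟩ := hineff
  obtain ⟨i₀, hi₀⟩ := hν₀d.2
  have hv₀ : P.Improvable da i₀ := ⟨ν₀, hν₀m, hν₀d.1, hi₀⟩
  set f : I → I := fun v =>
    if hv : P.Improvable da v then (SchoolChoice.key2 P da hda v hv).choose else v with hfdef
  have fspec : ∀ v (hv : P.Improvable da v),
      P.Improvable da (f v) ∧ P.Envy da (f v) v ∧
      ∀ s, da v = some s → ∀ h', P.Improvable da h' → P.Envy da h' v →
        P.prio s (f v) ≤ P.prio s h' := by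
    intro v hv
    simp only [hfdef, dif_pos hv]
    exact (SchoolChoice.key2 P da hda v hv).choose_spec
  have hIter : ∀ n, P.Improvable da (f^[n] i₀) := by
    intro n
    induction n with
    | zero => exact hv₀
    | succ n ih =>
      rw [Function.iterate_succ_apply']
      exact (fspec _ ih).1
  obtain ⟨a, b, hlt, he⟩ : ∃ a b, a < b ∧ f^[a] i₀ = f^[b] i₀ := by
    obtain ⟨a, b, hab, he⟩ := Finite.exists_ne_map_eq_of_infinite (fun n => f^[n] i₀)
    rcases hab.lt_or_gt with h | h
    exacts [⟨a, b, h, he⟩, ⟨b, a, h, he.symm⟩]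
  set v₁ : I := f^[a] i₀ with hv₁def
  set p : ℕ := b - a with hpdef
  have hp : 0 < p := by omega
  have hper : f^[p] v₁ = v₁ := by
    rw [hv₁def, ← Function.iterate_add_apply]
    have : p + a = b := by omega
    rw [this]
    exact he.symm
  have hOrbImp : ∀ x, (∃ m, f^[m] v₁ = x) → P.Improvable da x := by
    rintro x ⟨m, rfl⟩
    rw [hv₁def, ← Function.iterate_add_apply]
    exact hIter _
  set π : I → I := fun x =>
    if h : ∃ m, f^[m] v₁ = x then f^[Classical.choose h + (p - 1)] v₁ else x with hπdef
  have hπ1 : ∀ x (hx : ∃ m, f^[m] v₁ = x), f (π x) = x ∧ ∃ m, f^[m] v₁ = π x := by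
    intro x hx
    have hm := Classical.choose_spec hx
    simp only [hπdef, dif_pos hx]
    constructor
    · rw [← Function.iterate_succ_apply' f (Classical.choose hx + (p - 1)) v₁]
      have e : (Classical.choose hx + (p - 1)).succ = Classical.choose hx + p := by omega
      rw [e, Function.iterate_add_apply, hper, hm]
    · exact ⟨_, rfl⟩
  have hπ2 : ∀ x, ¬ (∃ m, f^[m] v₁ = x) → π x = x := by
    intro x hx
    simp only [hπdef, dif_neg hx]
  have hπinj : Function.Injective π := by
    intro x y hxy
    by_cases hx : ∃ m, f^[m] v₁ = x <;> by_cases hy : ∃ m, f^[m] v₁ = y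
    · rw [← (hπ1 x hx).1, hxy, (hπ1 y hy).1]
    · exfalso
      have h2 := (hπ1 x hx).2
      rw [hxy, hπ2 y hy] at h2
      exact hy h2
    · exfalso
      have h2 := (hπ1 y hy).2
      rw [← hxy, hπ2 x hx] at h2
      exact hx h2
    · rw [hπ2 x hx, hπ2 y hy] at hxy
      exact hxy
  set μ : I → Option S := fun x => da (π x) with hμdef
  have hμm : P.IsMatching μ := by
    intro i j s hi hj
    simp only [hμdef] at hi hj
    exact hπinj (hda.1 (π i) (π j) s hi hj)
  have hstrictOrb : ∀ x, (∃ m, f^[m] v₁ = x) → P.rank x (μ x) < P.rank x (da x) := by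
    intro x hx
    have h1 := hπ1 x hx
    have h2 := (fspec (π x) (hOrbImp (π x) h1.2)).2.1
    rw [h1.1] at h2
    exact h2
  have hwd : P.WeakDom μ da := by
    intro x
    by_cases hx : ∃ m, f^[m] v₁ = x
    · exact (hstrictOrb x hx).le
    · simp only [hμdef, hπ2 x hx]
      exact le_refl _
  refine ⟨μ, hμm, ⟨hwd, v₁, hstrictOrb v₁ ⟨0, rfl⟩⟩, ?_⟩
  intro h hviol himp
  obtain ⟨j, s, hj, hpref, hprio⟩ := hviol
  have hwh : P.rank h (some s) < P.rank h (da h) := lt_of_lt_of_le hpref (hwd h)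
  by_cases hOj : ∃ m, f^[m] v₁ = j
  · have h1 := hπ1 j hOj
    have hsv : da (π j) = some s := by simpa only [hμdef] using hj
    have hEnvy : P.Envy da h (π j) := by
      show P.rank h (da (π j)) < P.rank h (da h)
      rw [hsv]
      exact hwh
    have hmin := (fspec (π j) (hOrbImp (π j) h1.2)).2.2 s hsv h himp hEnvy
    rw [h1.1] at hmin
    omega
  · have hjda : da j = some s := by
      have := hπ2 j hOj
      simp only [hμdef, this] at hj
      exact hj
    exact hda.2.2.2 h ⟨j, s, hjda, hwh, hprio⟩
end

section
/- In the JBC construction, the map f sending each school s ∈ S*(P) to the DA school of its just-below-cutoff student i_s* is a well-defined map from S*(P) into S*(P); consequently, since every node of the induced functional digraph on S*(P) has out-degree one, this digraph contains at least one directed cycle. -/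
/-- the JBC map `f : s ↦ da (i_s*)` is a well-defined map from `S*(P)`
into `S*(P)`, and hence the induced functional digraph on `S*(P)` (every node of
out-degree one) contains a directed cycle. Here `S*(P)` is the set of schools
rejecting some improvable student during DA, i.e. (for student-proposing DA) the
schools some improvable student prefers to her DA assignment; `A s` is the set of
improvable students below the cutoff at `s` who prefer `s`; `istar s` is the
highest-priority member of `A s`. -/
theorem stmt5 {I S : Type*} [Fintype I] [Fintype S] (P : SchoolChoice I S)
    (da : I → Option S) (hda : P.Stable da)
    (hopt : ∀ ν, P.Stable ν → P.WeakDom da ν)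
    (hineff : ¬ P.ParetoEfficient da)
    (Sstar : Set S)
    (hSstar : ∀ s, s ∈ Sstar ↔
      ∃ h, P.Improvable da h ∧ P.rank h (some s) < P.rank h (da h))
    (A : S → Set I)
    (hA : ∀ s i, i ∈ A s ↔ P.Improvable da i ∧
        P.rank i (some s) < P.rank i (da i) ∧
        ∀ j, da j = some s → P.prio s j < P.prio s i)
    (istar : S → I)
    (histar : ∀ s ∈ Sstar, istar s ∈ A s ∧ ∀ h ∈ A s, P.prio s (istar s) ≤ P.prio s h) :
    (∀ s ∈ Sstar, ∃ s', da (istar s) = some s' ∧ s' ∈ Sstar) ∧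
    (∀ f : S → S, (∀ s ∈ Sstar, da (istar s) = some (f s)) →
      ∃ s ∈ Sstar, ∃ n, 0 < n ∧ f^[n] s = s) := by
  classical
  obtain ⟨hmatch, hIR, hNW, hNV⟩ := hda
  -- key lemma: any beneficiary of a weakly dominating matching has a DA school in Sstar
  have key : ∀ μ, P.IsMatching μ → P.WeakDom μ da → ∀ i,
      P.rank i (μ i) < P.rank i (da i) → ∃ s', da i = some s' ∧ s' ∈ Sstar := by
    intro μ hμm hμd i hi
    set B : Finset I := Finset.univ.filter (fun k => P.rank k (μ k) < P.rank k (da k)) with hB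
    have hBmem : ∀ k, k ∈ B ↔ P.rank k (μ k) < P.rank k (da k) := by
      intro k; simp [hB]
    have hsome : ∀ k ∈ B, ∃ s, μ k = some s := by
      intro k hk
      cases hμk : μ k with
      | none =>
        exfalso
        have h1 := (hBmem k).mp hk
        have h2 := hIR k
        rw [hμk] at h1
        omega
      | some s => exact ⟨s, rfl⟩
    have step : ∀ k ∈ B, ∃ j, j ∈ B ∧ da j = μ k := by
      intro k hk
      obtain ⟨s, hs⟩ := hsome k hk
      have hk' := (hBmem k).mp hk
      by_cases hocc : ∃ j, da j = some s
      · obtain ⟨j, hj⟩ := hocc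
        refine ⟨j, ?_, by rw [hj, hs]⟩
        rw [hBmem]
        rcases lt_or_eq_of_le (hμd j) with h | h
        · exact h
        · exfalso
          have h1 : μ j = da j := P.rank_inj j h
          have h2 : μ j = some s := by rw [h1, hj]
          have h3 : j = k := hμm j k s h2 hs
          subst h3
          rw [hj, hs] at hk'
          omega
      · exfalso
        push_neg at hocc
        have := hNW s hocc k
        rw [hs] at hk'
        omega
    -- choice function g on B
    have hg : ∀ k ∈ B, ∃ j, (j ∈ B ∧ da j = μ k) := step
    set g : ∀ k ∈ B, I := fun k hk => (hg k hk).choose with hgdef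
    have hgmem : ∀ k hk, g k hk ∈ B := fun k hk => (hg k hk).choose_spec.1
    have hgda : ∀ k hk, da (g k hk) = μ k := fun k hk => (hg k hk).choose_spec.2
    have hginj : ∀ k₁ k₂ hk₁ hk₂, g k₁ hk₁ = g k₂ hk₂ → k₁ = k₂ := by
      intro k₁ k₂ hk₁ hk₂ heq
      have h1 : μ k₁ = μ k₂ := by
        rw [← hgda k₁ hk₁, ← hgda k₂ hk₂, heq]
      obtain ⟨s, hs⟩ := hsome k₁ hk₁
      exact hμm k₁ k₂ s hs (by rw [← h1, hs])
    have hsurj := Finset.surj_on_of_inj_on_of_card_le g hgmem hginj le_rfl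
    have hiB : i ∈ B := (hBmem i).mpr hi
    obtain ⟨k, hk, hik⟩ := hsurj i hiB
    obtain ⟨s', hs'⟩ := hsome k hk
    refine ⟨s', by rw [hik, hgda k hk, hs'], ?_⟩
    rw [hSstar]
    refine ⟨k, ⟨μ, hμm, hμd, (hBmem k).mp hk⟩, ?_⟩
    rw [← hs']
    exact (hBmem k).mp hk
  -- part 1
  have part1 : ∀ s ∈ Sstar, ∃ s', da (istar s) = some s' ∧ s' ∈ Sstar := by
    intro s hs
    obtain ⟨hmem, _⟩ := histar s hs
    obtain ⟨himp, _, _⟩ := (hA s (istar s)).mp hmem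
    obtain ⟨μ, hμm, hμd, hμlt⟩ := himp
    exact key μ hμm hμd (istar s) hμlt
  refine ⟨part1, ?_⟩
  intro f hf
  -- Sstar is nonempty
  have hne : ∃ s, s ∈ Sstar := by
    rw [SchoolChoice.ParetoEfficient] at hineff
    push_neg at hineff
    obtain ⟨ν, hνm, hνd, i, hilt⟩ := hineff
    obtain ⟨s', hs', hs'star⟩ := key ν hνm hνd i hilt
    exact ⟨s', hs'star⟩
  obtain ⟨s₀, hs₀⟩ := hne
  -- f maps Sstar into Sstar
  have hfmem : ∀ s ∈ Sstar, f s ∈ Sstar := by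
    intro s hs
    obtain ⟨s', hs', hs'star⟩ := part1 s hs
    have : some (f s) = some s' := by rw [← hf s hs, hs']
    rwa [Option.some_inj.mp this]
  have hiter : ∀ n, f^[n] s₀ ∈ Sstar := by
    intro n
    induction n with
    | zero => exact hs₀
    | succ n ih =>
      rw [Function.iterate_succ_apply']
      exact hfmem _ ih
  -- pigeonhole
  obtain ⟨a, b, hab, heq⟩ := Fintype.exists_ne_map_eq_of_card_lt
    (fun n : Fin (Fintype.card S + 1) => f^[(n : ℕ)] s₀)
    (by simp)
  rcases hab.lt_or_gt with h | h
  · refine ⟨f^[(a : ℕ)] s₀, hiter a, (b : ℕ) - (a : ℕ), by omega, ?_⟩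
    rw [← Function.iterate_add_apply]
    have : (b : ℕ) - (a : ℕ) + (a : ℕ) = (b : ℕ) := by omega
    rw [this]
    exact heq.symm
  · refine ⟨f^[(b : ℕ)] s₀, hiter b, (a : ℕ) - (b : ℕ), by omega, ?_⟩
    rw [← Function.iterate_add_apply]
    have : (a : ℕ) - (b : ℕ) + (b : ℕ) = (a : ℕ) := by omega
    rw [this]
    exact heq
end

section
/- Every edge traded by the JBC mechanism is empty-labelled: for each school s ∈ S*(P) with cutoff student j = ī(s), the set of improvable students who envy j under DA coincides with A(s), and since i_s* is the highest-priority student in A(s) at s, the label l(i_s* → j) is empty. Hence the matching produced by JBC is strongly justifiable. -/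
lemma stable_prio_lt {I S : Type*} (P : SchoolChoice I S) (da : I → Option S)
    (hda : P.Stable da) {h : I} {s : S} (hr : P.rank h (some s) < P.rank h (da h))
    {j : I} (hj : da j = some s) : P.prio s j < P.prio s h := by
  have hne : h ≠ j := by
    rintro rfl
    rw [hj] at hr; exact lt_irrefl _ hr
  have hnv := hda.2.2.2 h
  have h1 : ¬ P.prio s h < P.prio s j := fun hlt => hnv ⟨j, s, hj, hr, hlt⟩
  have h2 : P.prio s j ≠ P.prio s h := fun he => hne (P.prio_inj s he).symm
  omega

/-- every edge traded by JBC is empty-labelled: for `s ∈ S*(P)` with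
cutoff student `j` (the DA occupant of `s`), the set of improvable students envying
`j` coincides with `A s`, and since `istar s` is the highest-priority member of
`A s`, the label of the edge `istar s → j` is empty; hence the JBC matching (any
DA-improvement in which every student who changes assignment is some `istar s`
entering `s ∈ S*(P)`) is strongly justifiable. -/
theorem stmt6 {I S : Type*} [Fintype I] [Fintype S] (P : SchoolChoice I S)
    (da : I → Option S) (hda : P.Stable da)
    (Sstar : Set S)
    (hSstar : ∀ s, s ∈ Sstar ↔
      ∃ h, P.Improvable da h ∧ P.rank h (some s) < P.rank h (da h))
    (A : S → Set I)
    (hA : ∀ s i, i ∈ A s ↔ P.Improvable da i ∧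
        P.rank i (some s) < P.rank i (da i) ∧
        ∀ j, da j = some s → P.prio s j < P.prio s i)
    (istar : S → I)
    (histar : ∀ s ∈ Sstar, istar s ∈ A s ∧ ∀ h ∈ A s, P.prio s (istar s) ≤ P.prio s h) :
    (∀ s ∈ Sstar, ∀ j, da j = some s →
      ∀ h, (P.Improvable da h ∧ P.Envy da h j) ↔ h ∈ A s) ∧
    (∀ s ∈ Sstar, ∀ j, da j = some s →
      ∀ h, ¬ (P.Improvable da h ∧ P.rank h (some s) < P.rank h (da h) ∧
        P.prio s h < P.prio s (istar s))) ∧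
    (∀ μ : I → Option S, P.IsMatching μ → P.WeakDom μ da →
      (∀ i, μ i ≠ da i → ∃ s ∈ Sstar, i = istar s ∧ μ i = some s) →
      ∀ h, P.Violates μ h → ¬ P.Improvable da h) := by
  refine ⟨?_, ?_, ?_⟩
  · intro s hs j hj h
    constructor
    · rintro ⟨himp, henv⟩
      rw [SchoolChoice.Envy, hj] at henv
      exact (hA s h).2 ⟨himp, henv, fun j' hj' => stable_prio_lt P da hda henv hj'⟩
    · intro hAs
      obtain ⟨himp, hr, -⟩ := (hA s h).1 hAs
      exact ⟨himp, by rwa [SchoolChoice.Envy, hj]⟩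
  · intro s hs j hj h
    rintro ⟨himp, hr, hlt⟩
    have hAs : h ∈ A s :=
      (hA s h).2 ⟨himp, hr, fun j' hj' => stable_prio_lt P da hda hr hj'⟩
    exact absurd ((histar s hs).2 h hAs) (by omega)
  · intro μ hμm hμw hμch h hviol himp
    obtain ⟨j, s, hjs, hr, hp⟩ := hviol
    have hrda : P.rank h (some s) < P.rank h (da h) := lt_of_lt_of_le hr (hμw h)
    by_cases hch : μ j = da j
    · rw [hch] at hjs
      exact absurd (stable_prio_lt P da hda hrda hjs) (by omega)
    · obtain ⟨s', hs', rfl, hμj⟩ := hμch j hch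
      rw [hμj] at hjs
      obtain rfl : s = s' := by injection hjs with h'; exact h'.symm
      have hAs : h ∈ A s :=
        (hA s h).2 ⟨himp, hrda, fun j' hj' => stable_prio_lt P da hda hrda hj'⟩
      exact absurd ((histar s hs').2 h hAs) (by omega)
end

section
/- In any strongly justifiable improvement over DA (a matching induced by a cycle packing all of whose edges are empty-labelled), if some student enters a school s (i.e., is assigned to s but was not under DA), then that student must be i_s*, the highest-priority improvable student below the cutoff of s who prefers s to her DA assignment. -/
theorem perm_transGen_self {I : Type*} [Fintype I] {R : I → I → Prop}
    (σ : Equiv.Perm I) (h : ∀ j, σ j ≠ j → R j (σ j)) (i : I) (hi : σ i ≠ i) :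
    Relation.TransGen R i i := by
  have key : ∀ k : ℕ, Relation.TransGen R i ((σ ^ (k + 1)) i) := by
    intro k
    induction k with
    | zero => simpa using Relation.TransGen.single (h i hi)
    | succ k ih =>
        have hmove : σ ((σ ^ (k + 1)) i) ≠ (σ ^ (k + 1)) i := by
          intro hfix
          apply hi
          have hcomm : σ ((σ ^ (k + 1)) i) = (σ ^ (k + 1)) (σ i) := by
            rw [← Equiv.Perm.mul_apply, ← Equiv.Perm.mul_apply, ← pow_succ, ← pow_succ']
          exact (σ ^ (k + 1)).injective (hcomm.symm.trans hfix)
        have := ih.tail (h _ hmove)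
        have heq : σ ((σ ^ (k + 1)) i) = (σ ^ (k + 1 + 1)) i := by
          simp [pow_succ', Equiv.Perm.mul_apply]
        rwa [heq] at this
  have hpos : 0 < orderOf σ := orderOf_pos σ
  have := key (orderOf σ - 1)
  rwa [Nat.sub_add_cancel hpos, pow_orderOf_eq_one, Equiv.Perm.one_apply] at this

/-- in a strongly justifiable improvement over DA (induced by a cycle
packing `σ` all of whose edges have empty label), any student entering a school `s`
must be `i_s*`: she belongs to `A s` (improvable, prefers `s` to her DA assignment,
below the cutoff at `s`) and has the highest priority at `s` among members of `A s`.
Improvable = lies on a cycle of the envy digraph. -/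
theorem stmt7 {I S : Type*} [Fintype I] [Fintype S] (P : SchoolChoice I S)
    (da : I → Option S) (hda : P.Stable da)
    (σ : Equiv.Perm I) (hcyc : ∀ i, σ i ≠ i → P.Envy da i (σ i))
    (hempty : ∀ i, σ i ≠ i → ∀ s, da (σ i) = some s → ∀ h,
      ¬ (Relation.TransGen (P.Envy da) h h ∧
          P.rank h (some s) < P.rank h (da h) ∧ P.prio s h < P.prio s i))
    (i : I) (s : S) (hmove : σ i ≠ i) (hi : da (σ i) = some s) :
    (Relation.TransGen (P.Envy da) i i ∧
      P.rank i (some s) < P.rank i (da i) ∧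
      ∀ j, da j = some s → P.prio s j < P.prio s i) ∧
    (∀ h, (Relation.TransGen (P.Envy da) h h ∧
        P.rank h (some s) < P.rank h (da h) ∧
        ∀ j, da j = some s → P.prio s j < P.prio s h) →
      P.prio s i ≤ P.prio s h) := by
  obtain ⟨hmatch, hir, hnw, hnov⟩ := hda
  have hcycle : Relation.TransGen (P.Envy da) i i :=
    perm_transGen_self σ hcyc i hmove
  have henvy : P.rank i (some s) < P.rank i (da i) := by
    have := hcyc i hmove
    rwa [SchoolChoice.Envy, hi] at this
  have hbelow : ∀ j, da j = some s → P.prio s j < P.prio s i := by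
    intro j hj
    have hne : P.prio s j ≠ P.prio s i := by
      intro heq
      have : j = i := P.prio_inj s heq
      subst this
      rw [hj] at henvy
      exact lt_irrefl _ henvy
    have hle : ¬ P.prio s i < P.prio s j := by
      intro hlt
      exact hnov i ⟨j, s, hj, henvy, hlt⟩
    omega
  refine ⟨⟨hcycle, henvy, hbelow⟩, ?_⟩
  intro h ⟨hhc, hhr, _⟩
  by_contra hlt
  push_neg at hlt
  exact hempty i hmove s hi h ⟨hhc, hhr, hlt⟩
end

section
/- The set of strongly justifiable matchings of a school choice problem coincides with the set of matchings obtained by executing arbitrary subsets of the disjoint cycles found by the JBC mechanism; consequently, this set forms a lattice under Pareto-dominance with the JBC matching as unique maximal element and the DA matching as minimal element. -/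
/-- the strongly justifiable matchings are exactly the matchings obtained
by executing subsets of the disjoint cycles found by JBC (the cycles of the
functional digraph `f : s ↦ da (i_s*)` on `S*(P)`); consequently, under
Pareto-dominance the JBC matching (which executes all cycles) is the unique maximal
element and the DA matching is the minimal element of this set. -/
theorem stmt8 {I S : Type*} [Fintype I] [Fintype S] (P : SchoolChoice I S)
    (da : I → Option S) (hda : P.Stable da)
    (Imp : I → Prop) (hImp : ∀ h, Imp h ↔ Relation.TransGen (P.Envy da) h h)
    (Sstar : Set S)
    (hSstar : ∀ s, s ∈ Sstar ↔ ∃ h, Imp h ∧ P.rank h (some s) < P.rank h (da h))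
    (A : S → Set I)
    (hA : ∀ s i, i ∈ A s ↔ Imp i ∧ P.rank i (some s) < P.rank i (da i) ∧
        ∀ j, da j = some s → P.prio s j < P.prio s i)
    (istar : S → I)
    (histar : ∀ s ∈ Sstar, istar s ∈ A s ∧ ∀ h ∈ A s, P.prio s (istar s) ≤ P.prio s h)
    (f : S → S) (hf : ∀ s ∈ Sstar, da (istar s) = some (f s))
    (SJ : (I → Option S) → Prop)
    (hSJ : ∀ μ, SJ μ ↔ ∃ σ : Equiv.Perm I, (∀ i, μ i = da (σ i)) ∧
        (∀ i, σ i ≠ i → P.Envy da i (σ i)) ∧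
        (∀ i, σ i ≠ i → ∀ s, da (σ i) = some s → ∀ h,
          ¬ (Imp h ∧ P.rank h (some s) < P.rank h (da h) ∧ P.prio s h < P.prio s i)))
    (FromJBC : (I → Option S) → Prop)
    (hFrom : ∀ μ, FromJBC μ ↔ ∃ T : Set S, T ⊆ Sstar ∧ (∀ s ∈ T, f s ∈ T) ∧
        (∀ s ∈ T, ∃ n, 0 < n ∧ f^[n] s = s) ∧
        (∀ s ∈ T, μ (istar s) = some s) ∧
        (∀ i, (∀ s ∈ T, i ≠ istar s) → μ i = da i))
    (μJBC : I → Option S)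
    (hJBC : FromJBC μJBC ∧
      ∀ s ∈ Sstar, (∃ n, 0 < n ∧ f^[n] s = s) → μJBC (istar s) = some s) :
    (∀ μ, SJ μ ↔ FromJBC μ) ∧
    (∀ μ, SJ μ → P.WeakDom μJBC μ ∧ P.WeakDom μ da) := by
  classical
  obtain ⟨hm, hIR, hNW, hNV⟩ := hda
  have hassign : ∀ s ∈ Sstar, ∃ j, da j = some s := by
    intro s hs
    obtain ⟨h, hh, hr⟩ := (hSstar s).mp hs
    by_contra hc
    push_neg at hc
    exact absurd (hNW s hc h) (not_le.mpr hr)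
  -- Direction SJ → FromJBC
  have dir1 : ∀ μ, SJ μ → FromJBC μ := by
    intro μ hμ
    obtain ⟨σ, hσ1, hσ2, hσ3⟩ := (hSJ μ).mp hμ
    have hnf : ∀ i, σ i ≠ i → ∀ n, σ ((⇑σ)^[n] i) ≠ (⇑σ)^[n] i := by
      intro i hi n
      have h1 : σ ((⇑σ)^[n] i) = (⇑σ)^[n] (σ i) := by
        rw [← Function.iterate_succ_apply' σ n i, Function.iterate_succ_apply]
      rw [h1]
      intro h2
      exact hi (Function.Injective.iterate σ.injective n h2)
    have himp : ∀ i, σ i ≠ i → Imp i := by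
      intro i hi
      have chain : ∀ n, Relation.TransGen (P.Envy da) i ((⇑σ)^[n + 1] i) := by
        intro n
        induction n with
        | zero => simpa using Relation.TransGen.single (hσ2 i hi)
        | succ n ih =>
          refine ih.tail ?_
          have h3 := hσ2 _ (hnf i hi (n + 1))
          rwa [← Function.iterate_succ_apply' σ (n + 1) i] at h3
      have hord : (⇑σ)^[orderOf σ] i = i := by
        rw [Equiv.Perm.iterate_eq_pow, pow_orderOf_eq_one]; rfl
      have h4 := chain (orderOf σ - 1)
      rw [Nat.sub_add_cancel (orderOf_pos σ), hord] at h4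
      exact (hImp i).mpr h4
    have hdane : ∀ i, σ i ≠ i → ∃ s, da (σ i) = some s := by
      intro i hi
      cases hd : da (σ i) with
      | none =>
        exfalso
        have hE : P.rank i (da (σ i)) < P.rank i (da i) := hσ2 i hi
        rw [hd] at hE
        exact absurd (lt_of_lt_of_le hE (hIR i)) (lt_irrefl _)
      | some s => exact ⟨s, rfl⟩
    have key : ∀ i s, σ i ≠ i → da (σ i) = some s → s ∈ Sstar ∧ i = istar s := by
      intro i s hi hs
      have hrank : P.rank i (some s) < P.rank i (da i) := by
        have hE : P.rank i (da (σ i)) < P.rank i (da i) := hσ2 i hi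
        rwa [hs] at hE
      have hsS : s ∈ Sstar := (hSstar s).mpr ⟨i, himp i hi, hrank⟩
      have hprio : P.prio s (σ i) < P.prio s i := by
        rcases lt_trichotomy (P.prio s (σ i)) (P.prio s i) with h | h | h
        · exact h
        · exact absurd (P.prio_inj s h) hi
        · exact absurd (⟨σ i, s, hs, hrank, h⟩ : P.Violates da i) (hNV i)
      have hiA : i ∈ A s := by
        rw [hA]
        refine ⟨himp i hi, hrank, ?_⟩
        intro j hj
        rw [hm j (σ i) s hj hs]
        exact hprio
      refine ⟨hsS, ?_⟩
      by_contra hne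
      obtain ⟨hisA, hmin⟩ := histar s hsS
      have h1 : P.prio s (istar s) ≤ P.prio s i := hmin i hiA
      have h2 : P.prio s (istar s) ≠ P.prio s i := by
        intro h
        exact hne (P.prio_inj s h).symm
      have h3 : P.prio s (istar s) < P.prio s i := lt_of_le_of_ne h1 h2
      obtain ⟨hI2, hR2, _⟩ := (hA s (istar s)).mp hisA
      exact hσ3 i hi s hs (istar s) ⟨hI2, hR2, h3⟩
    set T : Set S := {s | ∃ i, σ i ≠ i ∧ da (σ i) = some s} with hTdef
    have hTfact : ∀ s ∈ T, s ∈ Sstar ∧ σ (istar s) ≠ istar s ∧ da (σ (istar s)) = some s := by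
      rintro s ⟨i, hi, hs⟩
      obtain ⟨h1, h2⟩ := key i s hi hs
      subst h2
      exact ⟨h1, hi, hs⟩
    have step : ∀ s ∈ T, f s ∈ T ∧ istar (f s) = σ.symm (istar s) := by
      intro s hsT
      obtain ⟨hsS, hne, hda'⟩ := hTfact s hsT
      have hfi : da (istar s) = some (f s) := hf s hsS
      set k := σ.symm (istar s) with hk
      have hσk : σ k = istar s := σ.apply_symm_apply _
      have hkne : σ k ≠ k := by
        rw [hσk]
        intro h
        exact hne (by rw [h, hσk]; exact h)
      have hdk : da (σ k) = some (f s) := by rw [hσk]; exact hfi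
      have hfT : f s ∈ T := ⟨k, hkne, hdk⟩
      exact ⟨hfT, (key k (f s) hkne hdk).2.symm⟩
    have iter : ∀ s ∈ T, ∀ n, f^[n] s ∈ T ∧ (⇑σ)^[n] (istar (f^[n] s)) = istar s := by
      intro s hsT n
      induction n with
      | zero => exact ⟨hsT, rfl⟩
      | succ n ih =>
        obtain ⟨hT', hiter⟩ := ih
        have hs' : f^[n + 1] s = f (f^[n] s) := Function.iterate_succ_apply' f n s
        obtain ⟨hT2, hist⟩ := step _ hT'
        refine ⟨by rw [hs']; exact hT2, ?_⟩
        rw [hs', Function.iterate_succ_apply, hist, σ.apply_symm_apply, hiter]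
    refine (hFrom μ).mpr ⟨T, ?_, ?_, ?_, ?_, ?_⟩
    · intro s hs; exact (hTfact s hs).1
    · intro s hs; exact (step s hs).1
    · intro s hs
      refine ⟨orderOf σ, orderOf_pos σ, ?_⟩
      obtain ⟨hT', hiter⟩ := iter s hs (orderOf σ)
      have hid : ∀ x : I, (⇑σ)^[orderOf σ] x = x := by
        intro x; rw [Equiv.Perm.iterate_eq_pow, pow_orderOf_eq_one]; rfl
      rw [hid] at hiter
      have h1 := (hTfact _ hT').2.2
      rw [hiter] at h1
      have h2 := (hTfact s hs).2.2
      rw [h1] at h2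
      exact Option.some.inj h2
    · intro s hs
      rw [hσ1]
      exact (hTfact s hs).2.2
    · intro i hi
      rw [hσ1]
      by_cases hfix : σ i = i
      · rw [hfix]
      · obtain ⟨s, hs⟩ := hdane i hfix
        have hsT : s ∈ T := ⟨i, hfix, hs⟩
        exact absurd (key i s hfix hs).2 (hi s hsT)
  -- Direction FromJBC → SJ
  have dir2 : ∀ μ, FromJBC μ → SJ μ := by
    intro μ hμ
    obtain ⟨T, hTS, hTcl, hTcy, hμ1, hμ2⟩ := (hFrom μ).mp hμ
    set jA : S → I := fun s => if h : ∃ j, da j = some s then h.choose else istar s with hjAdef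
    have hjA : ∀ s ∈ Sstar, da (jA s) = some s := by
      intro s hs
      have h := hassign s hs
      simp only [hjAdef, dif_pos h]
      exact h.choose_spec
    have hTit : ∀ s ∈ T, ∀ k, f^[k] s ∈ T := by
      intro s hs k
      induction k with
      | zero => exact hs
      | succ k ih => rw [Function.iterate_succ_apply']; exact hTcl _ ih
    have hfinj : ∀ s ∈ T, ∀ s' ∈ T, f s = f s' → s = s' := by
      intro s hs s' hs' hff
      obtain ⟨n, hn, hns⟩ := hTcy s hs
      obtain ⟨mm, hmm, hms⟩ := hTcy s' hs'
      have h1 : f^[n * mm] s = s := by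
        rw [Function.iterate_mul]
        exact Function.iterate_fixed hns mm
      have h2 : f^[n * mm] s' = s' := by
        rw [mul_comm, Function.iterate_mul]
        exact Function.iterate_fixed hms n
      have hpos : 0 < n * mm := Nat.mul_pos hn hmm
      have e : n * mm = (n * mm - 1) + 1 := (Nat.sub_add_cancel hpos).symm
      rw [e, Function.iterate_succ_apply, hff] at h1
      rw [e, Function.iterate_succ_apply] at h2
      exact h1.symm.trans h2
    have histinj : ∀ s ∈ T, ∀ s' ∈ T, istar s = istar s' → s = s' := by
      intro s hs s' hs' hii
      have h1 : da (istar s) = some (f s) := hf s (hTS hs)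
      have h2 : da (istar s') = some (f s') := hf s' (hTS hs')
      rw [hii, h2] at h1
      exact hfinj s hs s' hs' (Option.some.inj h1).symm
    have hpre : ∀ s ∈ T, ∃ t ∈ T, f t = s := by
      intro s hs
      obtain ⟨n, hn, hns⟩ := hTcy s hs
      have e : n = (n - 1) + 1 := (Nat.sub_add_cancel hn).symm
      rw [e, Function.iterate_succ_apply'] at hns
      exact ⟨f^[n - 1] s, hTit s hs _, hns⟩
    have hjAist : ∀ s ∈ T, ∃ t ∈ T, istar t = jA s := by
      intro s hs
      obtain ⟨t, ht, hts⟩ := hpre s hs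
      refine ⟨t, ht, ?_⟩
      have h1 : da (istar t) = some (f t) := hf t (hTS ht)
      rw [hts] at h1
      exact hm (istar t) (jA s) s h1 (hjA s (hTS hs))
    set g : I → I := fun i => if h : ∃ s, s ∈ T ∧ istar s = i then jA h.choose else i with hgdef
    have hg1 : ∀ s ∈ T, g (istar s) = jA s := by
      intro s hs
      have hex : ∃ t, t ∈ T ∧ istar t = istar s := ⟨s, hs, rfl⟩
      have h0 : g (istar s) = jA hex.choose := by
        simp only [hgdef, dif_pos hex]
      rw [h0, histinj _ hex.choose_spec.1 _ hs hex.choose_spec.2]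
    have hg2 : ∀ i, (¬ ∃ s, s ∈ T ∧ istar s = i) → g i = i := by
      intro i hi
      simp only [hgdef, dif_neg hi]
    have hginj : Function.Injective g := by
      intro a b hab
      by_cases ha : ∃ s, s ∈ T ∧ istar s = a
      · obtain ⟨s, hs, hsa⟩ := ha
        by_cases hb : ∃ s', s' ∈ T ∧ istar s' = b
        · obtain ⟨s', hs', hsb⟩ := hb
          rw [← hsa, ← hsb, hg1 s hs, hg1 s' hs'] at hab
          have h1 : da (jA s) = some s := hjA s (hTS hs)
          have h2 : da (jA s') = some s' := hjA s' (hTS hs')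
          rw [hab, h2] at h1
          rw [← hsa, ← hsb, Option.some.inj h1]
        · exfalso
          rw [← hsa, hg1 s hs, hg2 b hb] at hab
          obtain ⟨t, ht, hti⟩ := hjAist s hs
          exact hb ⟨t, ht, by rw [hti, hab]⟩
      · by_cases hb : ∃ s', s' ∈ T ∧ istar s' = b
        · exfalso
          obtain ⟨s', hs', hsb⟩ := hb
          rw [hg2 a ha, ← hsb, hg1 s' hs'] at hab
          obtain ⟨t, ht, hti⟩ := hjAist s' hs'
          exact ha ⟨t, ht, by rw [hti, ← hab]⟩
        · rw [hg2 a ha, hg2 b hb] at hab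
          exact hab
    set σ : Equiv.Perm I := Equiv.ofBijective g (Finite.injective_iff_bijective.mp hginj)
      with hσdef
    have hσg : ∀ i, σ i = g i := fun i => rfl
    have hnfix : ∀ i, g i ≠ i → ∃ s, s ∈ T ∧ istar s = i := by
      intro i hi
      by_contra hc
      exact hi (hg2 i hc)
    refine (hSJ μ).mpr ⟨σ, ?_, ?_, ?_⟩
    · intro i
      rw [hσg]
      by_cases hi : ∃ s, s ∈ T ∧ istar s = i
      · obtain ⟨s, hs, hsi⟩ := hi
        rw [← hsi, hg1 s hs, hjA s (hTS hs)]
        exact hμ1 s hs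
      · rw [hg2 i hi]
        refine hμ2 i ?_
        intro s hs he
        exact hi ⟨s, hs, he.symm⟩
    · intro i hi
      rw [hσg] at hi
      obtain ⟨s, hs, hsi⟩ := hnfix i hi
      have hgi : g i = jA s := by rw [← hsi, hg1 s hs]
      show P.rank i (da (g i)) < P.rank i (da i)
      rw [hgi, hjA s (hTS hs), ← hsi]
      exact ((hA s (istar s)).mp (histar s (hTS hs)).1).2.1
    · intro i hi s hds h hcon
      obtain ⟨hImph, hrankh, hprioh⟩ := hcon
      rw [hσg] at hi hds
      obtain ⟨t, ht, hti⟩ := hnfix i hi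
      have hgi : g i = jA t := by rw [← hti, hg1 t ht]
      rw [hgi, hjA t (hTS ht)] at hds
      have hts : t = s := Option.some.inj hds
      subst hts
      rcases lt_trichotomy (P.prio t (jA t)) (P.prio t h) with hlt | heq | hgt
      · have hhA : h ∈ A t := by
          rw [hA]
          refine ⟨hImph, hrankh, ?_⟩
          intro j hj
          rw [hm j (jA t) t hj (hjA t (hTS ht))]
          exact hlt
        have hle := (histar t (hTS ht)).2 h hhA
        rw [hti] at hle
        exact absurd hprioh (not_lt.mpr hle)
      · have hjh : jA t = h := P.prio_inj t heq
        rw [← hjh, hjA t (hTS ht)] at hrankh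
        exact lt_irrefl _ hrankh
      · exact hNV h ⟨jA t, t, hjA t (hTS ht), hrankh, hgt⟩
  -- weak dominance over da
  have wdda : ∀ μ, SJ μ → P.WeakDom μ da := by
    intro μ hμ i
    obtain ⟨σ, hσ1, hσ2, _⟩ := (hSJ μ).mp hμ
    rw [hσ1]
    by_cases hfix : σ i = i
    · rw [hfix]
    · exact le_of_lt (hσ2 i hfix)
  refine ⟨fun μ => ⟨dir1 μ, dir2 μ⟩, ?_⟩
  intro μ hμ
  refine ⟨?_, wdda μ hμ⟩
  obtain ⟨T, hTS, hTcl, hTcy, hμ1, hμ2⟩ := (hFrom μ).mp (dir1 μ hμ)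
  have hJweak : P.WeakDom μJBC da := wdda μJBC (dir2 μJBC hJBC.1)
  intro i
  by_cases hi : ∃ s, s ∈ T ∧ istar s = i
  · obtain ⟨s, hs, hsi⟩ := hi
    rw [← hsi, hμ1 s hs, hJBC.2 s (hTS hs) (hTcy s hs)]
  · have he : μ i = da i := hμ2 i (fun s hs he => hi ⟨s, hs, he.symm⟩)
    rw [he]
    exact hJweak i
end

section
/- If two strongly justifiable matchings both strictly improve the same student relative to DA, then they assign that student the same school (essential uniqueness of strongly justifiable improvements). -/
section Aux

variable {I S : Type*} (P : SchoolChoice I S) (da : I → Option S)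

private lemma aux_moved_pow (σ : Equiv.Perm I) {x : I} (hx : σ x ≠ x) (m : ℕ) :
    σ ((σ ^ m) x) ≠ (σ ^ m) x := by
  intro h
  apply hx
  apply (σ ^ m).injective
  have h1 : (σ ^ m) (σ x) = ((σ ^ m) * σ) x := rfl
  have h2 : σ ((σ ^ m) x) = (σ * (σ ^ m)) x := rfl
  rw [h1, ← pow_succ, pow_succ', ← h2, h]

private lemma aux_cycle (σ : Equiv.Perm I) [Fintype I]
    (henv : ∀ i, σ i ≠ i → P.Envy da i (σ i)) {x : I} (hx : σ x ≠ x) :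
    Relation.TransGen (P.Envy da) x x := by
  classical
  have hstep : ∀ m : ℕ, Relation.TransGen (P.Envy da) x ((σ ^ (m + 1)) x) := by
    intro m
    induction m with
    | zero =>
        have := henv x hx
        exact Relation.TransGen.single (by simpa using this)
    | succ n ih =>
        have h2 : P.Envy da ((σ ^ (n + 1)) x) (σ ((σ ^ (n + 1)) x)) :=
          henv _ (aux_moved_pow σ hx (n + 1))
        have h3 : (σ ^ (n + 2)) x = σ ((σ ^ (n + 1)) x) := by
          rw [pow_succ']; rfl
        exact ih.tail (h3 ▸ h2)
  obtain ⟨m, hm⟩ := Nat.exists_eq_succ_of_ne_zero (orderOf_pos σ).ne'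
  have := hstep m
  have hm' : m + 1 = orderOf σ := by omega
  rw [hm', pow_orderOf_eq_one] at this
  simpa using this

private lemma aux_da_some (hIR : P.IndRational da) (σ : Equiv.Perm I)
    (henv : ∀ i, σ i ≠ i → P.Envy da i (σ i)) {x : I} (hx : σ x ≠ x) :
    ∃ s, da (σ x) = some s := by
  cases hds : da (σ x) with
  | some s => exact ⟨s, rfl⟩
  | none =>
      have h := henv x hx
      unfold SchoolChoice.Envy at h
      rw [hds] at h
      exact absurd h (not_lt.mpr (hIR x))

private lemma aux_receiver_unique [Fintype I] (σ τ : Equiv.Perm I)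
    (hσ2 : ∀ i, σ i ≠ i → P.Envy da i (σ i))
    (hσ3 : ∀ i, σ i ≠ i → ∀ s, da (σ i) = some s → ∀ h,
        ¬ (Relation.TransGen (P.Envy da) h h ∧
            P.rank h (some s) < P.rank h (da h) ∧ P.prio s h < P.prio s i))
    (hτ2 : ∀ i, τ i ≠ i → P.Envy da i (τ i))
    (hτ3 : ∀ i, τ i ≠ i → ∀ s, da (τ i) = some s → ∀ h,
        ¬ (Relation.TransGen (P.Envy da) h h ∧
            P.rank h (some s) < P.rank h (da h) ∧ P.prio s h < P.prio s i))
    {x y : I} (hx : σ x ≠ x) (hy : τ y ≠ y) {s : S}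
    (hxs : da (σ x) = some s) (hys : da (τ y) = some s) : x = y := by
  have hcx : Relation.TransGen (P.Envy da) x x := aux_cycle P da σ hσ2 hx
  have hcy : Relation.TransGen (P.Envy da) y y := aux_cycle P da τ hτ2 hy
  have hrx : P.rank x (some s) < P.rank x (da x) := by
    have h := hσ2 x hx; unfold SchoolChoice.Envy at h; rwa [hxs] at h
  have hry : P.rank y (some s) < P.rank y (da y) := by
    have h := hτ2 y hy; unfold SchoolChoice.Envy at h; rwa [hys] at h
  have hxy : ¬ P.prio s x < P.prio s y := fun hc => hτ3 y hy s hys x ⟨hcx, hrx, hc⟩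
  have hyx : ¬ P.prio s y < P.prio s x := fun hc => hσ3 x hx s hxs y ⟨hcy, hry, hc⟩
  exact P.prio_inj s (le_antisymm (not_lt.mp hyx) (not_lt.mp hxy))

end Aux


/-- essential uniqueness of strongly justifiable improvements — if two
strongly justifiable matchings both strictly improve the same student relative to DA,
they assign her the same school. -/
theorem stmt9 {I S : Type*} [Fintype I] [Fintype S] (P : SchoolChoice I S)
    (da : I → Option S) (hda : P.Stable da)
    (SJ : (I → Option S) → Prop)
    (hSJ : ∀ μ, SJ μ ↔ ∃ σ : Equiv.Perm I, (∀ i, μ i = da (σ i)) ∧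
        (∀ i, σ i ≠ i → P.Envy da i (σ i)) ∧
        (∀ i, σ i ≠ i → ∀ s, da (σ i) = some s → ∀ h,
          ¬ (Relation.TransGen (P.Envy da) h h ∧
              P.rank h (some s) < P.rank h (da h) ∧ P.prio s h < P.prio s i)))
    (μ ν : I → Option S) (hμ : SJ μ) (hν : SJ ν) (i : I)
    (h1 : P.rank i (μ i) < P.rank i (da i))
    (h2 : P.rank i (ν i) < P.rank i (da i)) :
    μ i = ν i := by
  classical
  rw [hSJ] at hμ hν
  obtain ⟨σ, hσ1, hσ2, hσ3⟩ := hμ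
  obtain ⟨τ, hτ1, hτ2, hτ3⟩ := hν
  have hIR : P.IndRational da := hda.2.1
  rw [hσ1 i] at h1 ⊢
  rw [hτ1 i] at h2 ⊢
  have hσi : σ i ≠ i := by
    intro h; rw [h] at h1; exact lt_irrefl _ h1
  have hτi : τ i ≠ i := by
    intro h; rw [h] at h2; exact lt_irrefl _ h2
  suffices h : τ i = σ i by rw [h]
  by_contra hne
  have key : ∀ k : ℕ, τ ((σ ^ (k + 1)) i) = (σ ^ (k + 1)) i := by
    intro k
    induction k with
    | zero =>
        by_contra hk
        have hk' : τ (σ i) ≠ σ i := by simpa using hk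
        set y := τ.symm (σ i) with hy
        have hτy : τ y = σ i := τ.apply_symm_apply _
        have hyne : τ y ≠ y := by
          intro h
          have hy2 : y = σ i := h.symm.trans hτy
          exact hk' (by rw [← hy2]; exact h)
        obtain ⟨s, hs⟩ := aux_da_some P da hIR σ hσ2 hσi
        have hys : da (τ y) = some s := by rw [hτy]; exact hs
        have heq : i = y :=
          aux_receiver_unique P da σ τ hσ2 hσ3 hτ2 hτ3 hσi hyne hs hys
        exact hne ((congrArg τ heq).trans hτy)
    | succ n ih =>
        by_contra hk
        set x := (σ ^ (n + 1)) i with hxdef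
        have hxm : σ x ≠ x := aux_moved_pow σ hσi (n + 1)
        have hpow : (σ ^ (n + 2)) i = σ x := by rw [pow_succ']; rfl
        rw [hpow] at hk
        obtain ⟨s, hs⟩ := aux_da_some P da hIR σ hσ2 hxm
        set y := τ.symm (σ x) with hy
        have hτy : τ y = σ x := τ.apply_symm_apply _
        have hyne : τ y ≠ y := by
          intro h
          have hy2 : y = σ x := h.symm.trans hτy
          exact hk (by rw [← hy2]; exact h)
        have hys : da (τ y) = some s := by rw [hτy]; exact hs
        have heq : x = y :=
          aux_receiver_unique P da σ τ hσ2 hσ3 hτ2 hτ3 hxm hyne hs hys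
        have : τ x = σ x := (congrArg τ heq).trans hτy
        rw [ih] at this
        exact hxm this.symm
  obtain ⟨m, hm⟩ := Nat.exists_eq_succ_of_ne_zero (orderOf_pos σ).ne'
  have hfix := key m
  have hm' : m + 1 = orderOf σ := by omega
  rw [hm', pow_orderOf_eq_one] at hfix
  simp at hfix
  exact hτi hfix
end

section
/- There exists a school choice problem in which no matching is simultaneously justifiable and Pareto-efficient. In particular, in the six-student, six-school problem of Example ex:noeff, the unique justifiable Pareto improvement over DA is the matching induced by the 3-cycle (i1 → i4 → i2 → i1) in the envy digraph, and this matching is not Pareto-efficient. -/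
/-- Preference lists of the six students of Example `ex:noeff` (0-indexed:
student `k` = i_{k+1}, school `k` = s_{k+1}). -/
def prefList6 : Fin 6 → List (Fin 6)
  | 0 => [4, 3, 0]
  | 1 => [5, 0, 1]
  | 2 => [0, 1, 5, 3, 2]
  | 3 => [1, 3]
  | 4 => [3, 4]
  | 5 => [1, 3, 5]

/-- Priority lists of the six schools of Example `ex:noeff`. -/
def prioList6 : Fin 6 → List (Fin 6)
  | 0 => [0, 2, 1]
  | 1 => [1, 3, 2, 5]
  | 2 => [2]
  | 3 => [3, 2, 0, 5, 4]
  | 4 => [4, 0]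
  | 5 => [5, 1]

def rank6 (i : Fin 6) (o : Option (Fin 6)) : ℕ :=
  match o with
  | none => 9
  | some s => if s ∈ prefList6 i then (prefList6 i).idxOf s else 10 + s.val

def prio6 (s : Fin 6) (i : Fin 6) : ℕ :=
  if i ∈ prioList6 s then (prioList6 s).idxOf i else 10 + i.val

/-- The school choice problem of Example `ex:noeff`. -/
def P6 : SchoolChoice (Fin 6) (Fin 6) where
  rank := rank6
  rank_inj := by decide
  prio := prio6
  prio_inj := by decide

/-- The DA outcome of Example `ex:noeff`: each student `i_k` is assigned `s_k`. -/
def da6 : Fin 6 → Option (Fin 6) := fun k => some k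

/-- The matching induced by the envy-digraph 3-cycle (i1 → i4 → i2 → i1):
i1 → s4, i4 → s2, i2 → s1, everyone else at her DA school. -/
def muJ6 : Fin 6 → Option (Fin 6) := fun i => some (![3, 0, 2, 1, 4, 5] i)

/-! ### Auxiliary machinery -/

def m2f : Fin 6 → Option (Fin 6) := fun i => some (![0, 5, 2, 1, 4, 3] i)
def m3f : Fin 6 → Option (Fin 6) := fun i => some (![0, 5, 2, 3, 4, 1] i)
def m5f : Fin 6 → Option (Fin 6) := fun i => some (![4, 0, 2, 1, 3, 5] i)

def optL : List (Option (Fin 6)) := [none, some 0, some 1, some 2, some 3, some 4, some 5]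
def L6 : List (Fin 6) := [0, 1, 2, 3, 4, 5]

lemma mem_optL (o : Option (Fin 6)) : o ∈ optL := by
  rcases o with _ | s
  · simp [optL]
  · fin_cases s <;> simp [optL]

lemma mem_L6 (i : Fin 6) : i ∈ L6 := by fin_cases i <;> simp [L6]

def pairB (x y : Option (Fin 6)) : Bool :=
  match x, y with
  | some s, some t => s != t
  | _, _ => true

def matchB (a b c d e f : Option (Fin 6)) : Bool :=
  pairB a b && pairB a c && pairB a d && pairB a e && pairB a f &&
  pairB b c && pairB b d && pairB b e && pairB b f &&
  pairB c d && pairB c e && pairB c f &&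
  pairB d e && pairB d f && pairB e f

lemma pairB_of {μ : Fin 6 → Option (Fin 6)} (hm : P6.IsMatching μ) {i j : Fin 6}
    (hij : i ≠ j) : pairB (μ i) (μ j) = true := by
  rcases hx : μ i with _ | s <;> rcases hy : μ j with _ | t <;> simp [pairB]
  intro he
  exact hij (hm i j t (by rw [hx, he]) hy)

lemma matchB_of {μ : Fin 6 → Option (Fin 6)} (hm : P6.IsMatching μ) :
    matchB (μ 0) (μ 1) (μ 2) (μ 3) (μ 4) (μ 5) = true := by
  unfold matchB
  simp only [Bool.and_eq_true]
  refine ⟨⟨⟨⟨⟨⟨⟨⟨⟨⟨⟨⟨⟨⟨?_,?_⟩,?_⟩,?_⟩,?_⟩,?_⟩,?_⟩,?_⟩,?_⟩,?_⟩,?_⟩,?_⟩,?_⟩,?_⟩,?_⟩ <;>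
    exact pairB_of hm (by decide)

def eqB (μ ν : Fin 6 → Option (Fin 6)) : Bool :=
  L6.all fun i => μ i == ν i

lemma eq_of_eqB {μ ν : Fin 6 → Option (Fin 6)} (h : eqB μ ν = true) : μ = ν := by
  funext i
  exact eq_of_beq (List.all_eq_true.mp h i (mem_L6 i))

lemma stepB {b c : Bool} (h : (!b || c) = true) (hb : b = true) : c = true := by
  subst hb; simpa using h

lemma stepP2 {p : Prop} [Decidable p] {b c : Bool} (h : (!(decide p) || !b || c) = true)
    (hp : p) (hb : b = true) : c = true := by
  subst hb; simpa [decide_eq_true hp] using h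

lemma stepP {p : Prop} [Decidable p] {c : Bool} (h : (!(decide p) || c) = true)
    (hp : p) : c = true := stepB h (decide_eq_true hp)

/-! ### The weak-dominance characterization -/

def keyCheck : Bool :=
  optL.all fun a => !(decide (P6.rank 0 a ≤ P6.rank 0 (da6 0))) ||
  (optL.all fun b => !(decide (P6.rank 1 b ≤ P6.rank 1 (da6 1))) ||
  (optL.all fun c => !(decide (P6.rank 2 c ≤ P6.rank 2 (da6 2))) ||
  (optL.all fun d => !(decide (P6.rank 3 d ≤ P6.rank 3 (da6 3))) ||
  (optL.all fun e => !(decide (P6.rank 4 e ≤ P6.rank 4 (da6 4))) ||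
  (optL.all fun f => !(decide (P6.rank 5 f ≤ P6.rank 5 (da6 5))) ||
    !(matchB a b c d e f) ||
    (eqB ![a,b,c,d,e,f] da6 || eqB ![a,b,c,d,e,f] m2f || eqB ![a,b,c,d,e,f] m3f ||
     eqB ![a,b,c,d,e,f] muJ6 || eqB ![a,b,c,d,e,f] m5f))))))

set_option maxRecDepth 10000 in
lemma keyCheck_true : keyCheck = true := by decide

lemma keyW (μ : Fin 6 → Option (Fin 6)) (hm : P6.IsMatching μ)
    (hw : P6.WeakDom μ da6) :
    μ = da6 ∨ μ = m2f ∨ μ = m3f ∨ μ = muJ6 ∨ μ = m5f := by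
  have e : μ = ![μ 0, μ 1, μ 2, μ 3, μ 4, μ 5] := by
    funext i; fin_cases i <;> rfl
  have h1 := List.all_eq_true.mp keyCheck_true _ (mem_optL (μ 0))
  have h2 := List.all_eq_true.mp (stepP h1 (hw 0)) _ (mem_optL (μ 1))
  have h3 := List.all_eq_true.mp (stepP h2 (hw 1)) _ (mem_optL (μ 2))
  have h4 := List.all_eq_true.mp (stepP h3 (hw 2)) _ (mem_optL (μ 3))
  have h5 := List.all_eq_true.mp (stepP h4 (hw 3)) _ (mem_optL (μ 4))
  have h6 := List.all_eq_true.mp (stepP h5 (hw 4)) _ (mem_optL (μ 5))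
  have h7 := stepP2 h6 (hw 5) (matchB_of hm)
  simp only [Bool.or_eq_true] at h7
  rcases h7 with ((((h | h) | h) | h) | h)
  · exact Or.inl (e ▸ eq_of_eqB h)
  · exact Or.inr (Or.inl (e ▸ eq_of_eqB h))
  · exact Or.inr (Or.inr (Or.inl (e ▸ eq_of_eqB h)))
  · exact Or.inr (Or.inr (Or.inr (Or.inl (e ▸ eq_of_eqB h))))
  · exact Or.inr (Or.inr (Or.inr (Or.inr (e ▸ eq_of_eqB h))))

/-! ### Hand-rolled Boolean stability checks -/

def noViolB (μ : Fin 6 → Option (Fin 6)) : Bool :=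
  L6.all fun h => L6.all fun j =>
    match μ j with
    | none => true
    | some s => !(decide (P6.rank h (some s) < P6.rank h (μ h)) &&
                  decide (P6.prio s h < P6.prio s j))

lemma noViolB_of {μ : Fin 6 → Option (Fin 6)} (hv : ∀ h, ¬ P6.Violates μ h) :
    noViolB μ = true := by
  apply List.all_eq_true.mpr
  intro h _
  apply List.all_eq_true.mpr
  intro j _
  show (match μ j with
    | none => true
    | some s => !(decide (P6.rank h (some s) < P6.rank h (μ h)) &&
                  decide (P6.prio s h < P6.prio s j))) = true
  rcases hj : μ j with _ | s
  · rfl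
  · by_cases hA : P6.rank h (some s) < P6.rank h (μ h)
    · by_cases hB : P6.prio s h < P6.prio s j
      · exact absurd ⟨j, s, hj, hA, hB⟩ (hv h)
      · simp [hB]
    · simp [hA]

def nwB (μ : Fin 6 → Option (Fin 6)) : Bool :=
  L6.all fun s => !(L6.all fun j => decide (μ j ≠ some s)) ||
    (L6.all fun i => decide (P6.rank i (μ i) ≤ P6.rank i (some s)))

lemma nwB_of {μ : Fin 6 → Option (Fin 6)} (hnw : P6.NonWasteful μ) : nwB μ = true := by
  apply List.all_eq_true.mpr
  intro s _
  show (!(L6.all fun j => decide (μ j ≠ some s)) ||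
    (L6.all fun i => decide (P6.rank i (μ i) ≤ P6.rank i (some s)))) = true
  cases hE : (L6.all fun j => decide (μ j ≠ some s))
  · simp [hE]
  · simp only [hE, Bool.not_true, Bool.false_or]
    apply List.all_eq_true.mpr
    intro i _
    exact decide_eq_true
      (hnw s (fun j => of_decide_eq_true (List.all_eq_true.mp hE j (mem_L6 j))) i)

def stabCheck : Bool :=
  optL.all fun a => !(decide (P6.rank 0 a ≤ P6.rank 0 none)) ||
  (optL.all fun b => !(decide (P6.rank 1 b ≤ P6.rank 1 none)) ||
  (optL.all fun c => !(decide (P6.rank 2 c ≤ P6.rank 2 none)) ||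
  (optL.all fun d => !(decide (P6.rank 3 d ≤ P6.rank 3 none)) ||
  (optL.all fun e => !(decide (P6.rank 4 e ≤ P6.rank 4 none)) ||
  (optL.all fun f => !(decide (P6.rank 5 f ≤ P6.rank 5 none)) ||
    !(matchB a b c d e f) ||
    !(noViolB ![a,b,c,d,e,f]) ||
    !(nwB ![a,b,c,d,e,f]) ||
    (L6.all fun i => decide (P6.rank i (da6 i) ≤ P6.rank i (![a,b,c,d,e,f] i))))))))

set_option maxRecDepth 40000 in
set_option maxHeartbeats 4000000 in
lemma stabCheck_true : stabCheck = true := by decide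

lemma stabW (ν : Fin 6 → Option (Fin 6)) (hs : P6.Stable ν) : P6.WeakDom da6 ν := by
  obtain ⟨hm, hir, hnw, hv⟩ := hs
  have e : ν = ![ν 0, ν 1, ν 2, ν 3, ν 4, ν 5] := by
    funext i; fin_cases i <;> rfl
  have h1 := List.all_eq_true.mp stabCheck_true _ (mem_optL (ν 0))
  have h2 := List.all_eq_true.mp (stepP h1 (hir 0)) _ (mem_optL (ν 1))
  have h3 := List.all_eq_true.mp (stepP h2 (hir 1)) _ (mem_optL (ν 2))
  have h4 := List.all_eq_true.mp (stepP h3 (hir 2)) _ (mem_optL (ν 3))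
  have h5 := List.all_eq_true.mp (stepP h4 (hir 3)) _ (mem_optL (ν 4))
  have h6 := List.all_eq_true.mp (stepP h5 (hir 4)) _ (mem_optL (ν 5))
  have hmB := matchB_of hm
  have hvB : noViolB ![ν 0, ν 1, ν 2, ν 3, ν 4, ν 5] = true := e ▸ noViolB_of hv
  have hwB : nwB ![ν 0, ν 1, ν 2, ν 3, ν 4, ν 5] = true := e ▸ nwB_of hnw
  have hd5 : decide (P6.rank 5 (ν 5) ≤ P6.rank 5 none) = true := decide_eq_true (hir 5)
  simp only [hd5, hmB, hvB, hwB, Bool.not_true, Bool.false_or] at h6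
  intro i
  have := of_decide_eq_true (List.all_eq_true.mp h6 i (mem_L6 i))
  rwa [← e] at this

/-! ### Improvability facts -/

lemma impr0 : P6.Improvable da6 0 :=
  ⟨muJ6, by unfold SchoolChoice.IsMatching; decide, by unfold SchoolChoice.WeakDom; decide,
    by decide⟩

lemma impr3 : P6.Improvable da6 3 :=
  ⟨muJ6, by unfold SchoolChoice.IsMatching; decide, by unfold SchoolChoice.WeakDom; decide,
    by decide⟩

lemma impr5 : P6.Improvable da6 5 :=
  ⟨m2f, by unfold SchoolChoice.IsMatching; decide, by unfold SchoolChoice.WeakDom; decide,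
    by decide⟩

lemma notImpr2 : ¬ P6.Improvable da6 2 := by
  rintro ⟨μ, hm, hw, hlt⟩
  rcases keyW μ hm hw with h | h | h | h | h <;> subst h <;> exact absurd hlt (by decide)

lemma justMuJ : P6.Justifiable da6 muJ6 := by
  intro h hv
  have h2 : h = 2 := by
    revert hv
    have : ∀ h : Fin 6, P6.Violates muJ6 h → h = 2 := by
      unfold SchoolChoice.Violates; decide
    exact this h
  subst h2
  exact Or.inl notImpr2

lemma uniqMuJ : ∀ μ, P6.IsMatching μ → P6.Dom μ da6 → P6.Justifiable da6 μ → μ = muJ6 := by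
  intro μ hm hdom hj
  rcases keyW μ hm hdom.1 with h | h | h | h | h
  · exfalso
    obtain ⟨i, hi⟩ := hdom.2
    rw [h] at hi
    exact lt_irrefl _ hi
  · exfalso
    subst h
    rcases hj 0 (by unfold SchoolChoice.Violates; decide) with hni | hben
    · exact hni impr0
    · exact (by decide : ¬ (P6.rank (0 : Fin 6) (m2f 0) < P6.rank 0 (da6 0))) hben
  · exfalso
    subst h
    rcases hj 3 (by unfold SchoolChoice.Violates; decide) with hni | hben
    · exact hni impr3
    · exact (by decide : ¬ (P6.rank (3 : Fin 6) (m3f 3) < P6.rank 3 (da6 3))) hben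
  · exact h
  · exfalso
    subst h
    rcases hj 5 (by unfold SchoolChoice.Violates; decide) with hni | hben
    · exact hni impr5
    · exact (by decide : ¬ (P6.rank (5 : Fin 6) (m5f 5) < P6.rank 5 (da6 5))) hben

lemma notPE : ¬ P6.ParetoEfficient muJ6 := fun hpe =>
  hpe m5f (by unfold SchoolChoice.IsMatching; decide)
    (by unfold SchoolChoice.Dom SchoolChoice.WeakDom; decide)
/-- in the problem of Example `ex:noeff` (whose DA outcome is `da6`,
the student-optimal stable matching), no matching is simultaneously justifiable and
Pareto-efficient; in particular the unique justifiable Pareto improvement over DA is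
the matching `muJ6` induced by the 3-cycle (i1 → i4 → i2 → i1), and it is not
Pareto-efficient. -/
theorem stmt10 :
    P6.Stable da6 ∧ (∀ ν, P6.Stable ν → P6.WeakDom da6 ν) ∧
    (∀ μ, P6.IsMatching μ → P6.Dom μ da6 → P6.Justifiable da6 μ →
      ¬ P6.ParetoEfficient μ) ∧
    P6.Dom muJ6 da6 ∧ P6.Justifiable da6 muJ6 ∧
    (∀ μ, P6.IsMatching μ → P6.Dom μ da6 → P6.Justifiable da6 μ → μ = muJ6) ∧
    ¬ P6.ParetoEfficient muJ6 := by
  refine ⟨by unfold SchoolChoice.Stable SchoolChoice.IsMatching SchoolChoice.IndRational SchoolChoice.NonWasteful SchoolChoice.Violates; decide, stabW, ?_, by unfold SchoolChoice.Dom SchoolChoice.WeakDom; decide, justMuJ, uniqMuJ, notPE⟩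
  intro μ hm hd hj hpe
  rw [uniqMuJ μ hm hd hj] at hpe
  exact notPE hpe
end

section
/- Let μ⁺ be an SJBC+ outcome with beneficiary set B* = B(μ⁺), such that the refinement phase has terminated (no directed cycle of admissible edges remains at μ⁺). Then μ⁺ is not Pareto-dominated by any justifiable matching μ′ with B(μ′) = B(μ⁺); i.e., any justifiable matching Pareto-dominating μ⁺ must have a strictly larger beneficiary set. -/
/-- constrained efficiency of SJBC+ outcomes — if no directed cycle of
admissible edges remains at `μ⁺` (whose non-beneficiaries hold their DA assignments),
then any justifiable matching Pareto-dominating `μ⁺` has a strictly larger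
beneficiary set; in particular `μ⁺` is not Pareto-dominated by any justifiable
matching with the same beneficiary set. -/
theorem stmt12 {I S : Type*} [Fintype I] [Fintype S] (P : SchoolChoice I S)
    (da : I → Option S) (hda : P.Stable da)
    (μplus : I → Option S) (hm : P.IsMatching μplus) (hdom : P.Dom μplus da)
    (Bstar : Set I) (hB : P.Benef da μplus = Bstar)
    (hout : ∀ i, i ∉ Bstar → μplus i = da i)
    (Adm : I → I → Prop)
    (hAdm : ∀ i j, Adm i j ↔ i ∈ Bstar ∧ j ∈ Bstar ∧ i ≠ j ∧
        P.rank i (μplus j) < P.rank i (μplus i) ∧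
        ∀ h s, μplus j = some s → P.Improvable da h → h ≠ j →
          P.rank h (some s) < P.rank h (da h) → P.prio s h < P.prio s i → h ∈ Bstar)
    (hnocyc : ¬ ∃ σ : Equiv.Perm I, (∃ i, σ i ≠ i) ∧ ∀ i, σ i ≠ i → Adm i (σ i))
    (μ' : I → Option S) (hm' : P.IsMatching μ')
    (hdom' : P.Dom μ' da) (hjust : P.Justifiable da μ')
    (hdomover : P.Dom μ' μplus) :
    P.Benef da μplus ⊂ P.Benef da μ' := by
  obtain ⟨hmda, hirda, hnwda, hnovda⟩ := hda
  obtain ⟨hwd, -⟩ := hdom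
  obtain ⟨hwd', -⟩ := hdom'
  obtain ⟨hwdo, i0, hi0⟩ := hdomover
  have hsub : P.Benef da μplus ⊆ P.Benef da μ' := fun i hi =>
    lt_of_le_of_lt (hwdo i) hi
  refine ⟨hsub, fun hba => ?_⟩
  have hEq : P.Benef da μ' = Bstar := hB ▸ Set.Subset.antisymm hba hsub
  -- membership facts
  have hBmem : ∀ i, i ∈ Bstar → P.rank i (μplus i) < P.rank i (da i) := by
    intro i hi; rw [← hB] at hi; exact hi
  have hBmem' : ∀ i, i ∈ Bstar → P.rank i (μ' i) < P.rank i (da i) := by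
    intro i hi; rw [← hEq] at hi; exact hi
  have hBnot : ∀ i, i ∉ Bstar → μ' i = da i := by
    intro i hi
    rw [← hEq] at hi
    have h1 : ¬ P.rank i (μ' i) < P.rank i (da i) := hi
    exact P.rank_inj i (le_antisymm (hwd' i) (not_lt.mp h1))
  have hBnotp : ∀ i, i ∉ Bstar → μplus i = da i := hout
  -- assigned schools exist within Bstar
  have hsome : ∀ (ν : I → Option S), (∀ i, i ∈ Bstar → P.rank i (ν i) < P.rank i (da i)) →
      ∀ i, i ∈ Bstar → ∃ t, ν i = some t := by
    intro ν hmem i hi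
    cases ht : ν i with
    | none =>
        exfalso
        have := hmem i hi
        rw [ht] at this
        exact absurd (lt_of_lt_of_le this (hirda i)) (lt_irrefl _)
    | some t => exact ⟨t, rfl⟩
  -- Step A: any dominating matching with beneficiary set Bstar assigns each
  -- member of Bstar a school held under da by a member of Bstar.
  have stepA : ∀ (ν : I → Option S), P.IsMatching ν →
      (∀ i, i ∈ Bstar → P.rank i (ν i) < P.rank i (da i)) →
      (∀ i, i ∉ Bstar → ν i = da i) →
      ∀ i, i ∈ Bstar → ∃ k, k ∈ Bstar ∧ da k = ν i := by
    intro ν hmν hmem hν i hi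
    obtain ⟨t, ht⟩ := hsome ν hmem i hi
    have hocc : ∃ k, da k = some t := by
      by_contra hno
      push_neg at hno
      have := hnwda t (fun j h => hno j h) i
      have h2 := hmem i hi
      rw [ht] at h2
      exact absurd (lt_of_lt_of_le h2 this) (lt_irrefl _)
    obtain ⟨k, hk⟩ := hocc
    refine ⟨k, ?_, by rw [hk, ht]⟩
    by_contra hkB
    have hνk : ν k = some t := by rw [hν k hkB, hk]
    have : k = i := hmν k i t hνk ht
    exact hkB (this ▸ hi)
  -- Step B: μplus restricted to Bstar is onto the da-assignments of Bstar.
  have gA := stepA μplus hm hBmem hBnotp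
  have gspec : ∀ x : ↥Bstar, ∃ k : ↥Bstar, da ↑k = μplus ↑x := by
    intro x
    obtain ⟨k, hk, hke⟩ := gA ↑x x.2
    exact ⟨⟨k, hk⟩, hke⟩
  let g : ↥Bstar → ↥Bstar := fun x => (gspec x).choose
  have gprop : ∀ x : ↥Bstar, da ↑(g x) = μplus ↑x := fun x => (gspec x).choose_spec
  have ginj : Function.Injective g := by
    intro a b hab
    obtain ⟨t, ht⟩ := hsome μplus hBmem ↑a a.2
    have hb : μplus ↑b = some t := by
      rw [← gprop b, ← hab, gprop a, ht]
    exact Subtype.ext (hm ↑a ↑b t ht hb)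
  have gsurj : Function.Surjective g := Finite.injective_iff_surjective.mp ginj
  -- existence of the permutation target
  have hexist : ∀ i : I, ∃ j : I,
      (i ∈ Bstar → j ∈ Bstar ∧ μplus j = μ' i) ∧ (i ∉ Bstar → j = i) := by
    intro i
    by_cases hi : i ∈ Bstar
    · obtain ⟨k, hk, hke⟩ := stepA μ' hm' hBmem' hBnot i hi
      obtain ⟨x, hx⟩ := gsurj ⟨k, hk⟩
      refine ⟨↑x, fun _ => ⟨x.2, ?_⟩, fun hc => absurd hi hc⟩
      have := gprop x
      rw [hx] at this
      rw [← this, hke]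
    · exact ⟨i, fun hc => absurd hc hi, fun _ => rfl⟩
  let σf : I → I := fun i => (hexist i).choose
  have σin : ∀ i, i ∈ Bstar → σf i ∈ Bstar ∧ μplus (σf i) = μ' i :=
    fun i hi => (hexist i).choose_spec.1 hi
  have σout : ∀ i, i ∉ Bstar → σf i = i := fun i hi => (hexist i).choose_spec.2 hi
  have σinj : Function.Injective σf := by
    intro a b hab
    by_cases ha : a ∈ Bstar <;> by_cases hb2 : b ∈ Bstar
    · obtain ⟨t, ht⟩ := hsome μ' hBmem' a ha
      have h1 : μplus (σf a) = some t := by rw [(σin a ha).2, ht]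
      have h2 : μ' b = some t := by
        rw [← (σin b hb2).2, ← hab, h1]
      exact hm' a b t ht h2
    · exfalso
      have : σf b = b := σout b hb2
      rw [this] at hab
      exact hb2 (hab ▸ (σin a ha).1)
    · exfalso
      have : σf a = a := σout a ha
      rw [this] at hab
      exact ha (hab ▸ (σin b hb2).1)
    · rw [← σout a ha, ← σout b hb2, hab]
  have σbij : Function.Bijective σf := Finite.injective_iff_bijective.mp σinj
  refine hnocyc ⟨Equiv.ofBijective σf σbij, ⟨i0, ?_⟩, ?_⟩
  · -- σ i0 ≠ i0
    have hi0B : i0 ∈ Bstar := by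
      rw [← hEq]
      exact lt_of_lt_of_le hi0 (hwd i0)
    simp only [Equiv.ofBijective_apply]
    intro hcon
    have := (σin i0 hi0B).2
    rw [hcon] at this
    rw [this] at hi0
    exact lt_irrefl _ hi0
  · intro i hne
    simp only [Equiv.ofBijective_apply] at hne ⊢
    have hiB : i ∈ Bstar := by
      by_contra hc
      exact hne (σout i hc)
    obtain ⟨hσB, hσe⟩ := σin i hiB
    rw [hAdm]
    refine ⟨hiB, hσB, fun h => hne h.symm, ?_, ?_⟩
    · rw [hσe]
      rcases lt_or_eq_of_le (hwdo i) with h | h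
      · exact h
      · exfalso
        have hμeq : μ' i = μplus i := P.rank_inj i h
        obtain ⟨t, ht⟩ := hsome μplus hBmem i hiB
        have : μplus (σf i) = some t := by rw [hσe, hμeq, ht]
        exact hne (hm (σf i) i t this ht)
    · intro h s hs himp hnej hpref hprio
      have hμ's : μ' i = some s := by rw [← hσe, hs]
      by_cases hc : P.rank h (some s) < P.rank h (μ' h)
      · -- h's priority is violated under μ'
        have hviol : P.Violates μ' h := ⟨i, s, hμ's, hc, hprio⟩
        rcases hjust h hviol with h1 | h2
        · exact absurd himp h1
        · rw [← hEq]; exact h2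
      · rw [← hEq]
        exact lt_of_le_of_lt (not_lt.mp hc) hpref
end

section
/- Suppose matchings μ and μ′ both Pareto-dominate the DA matching, B(μ) = B(μ′) = B, every student outside B receives her DA school under both, and μ′ weakly Pareto-dominates μ. Then μ′ is obtained from μ by a permutation of the schools held by students in B, this permutation decomposes into disjoint cycles, and along each cycle every student weakly prefers (under her own preference) the μ-school of her successor to her own μ-school. -/
/-- if `μ` and `μ'` Pareto-dominate DA, have the same beneficiary set
`B`, agree with DA outside `B`, and `μ'` weakly Pareto-dominates `μ`, then `μ'` is
obtained from `μ` by a permutation of the schools held by students in `B` (fixing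
everybody outside `B`), the permutation decomposes into disjoint cycles (as any
permutation does), and every student weakly prefers the `μ`-school of her successor
to her own `μ`-school. -/
theorem stmt14 {I S : Type*} [Fintype I] [Fintype S] [DecidableEq I]
    (P : SchoolChoice I S) (da μ μ' : I → Option S) (hda : P.Stable da)
    (hm : P.IsMatching μ) (hm' : P.IsMatching μ')
    (hd : P.Dom μ da) (hd' : P.Dom μ' da)
    (B : Set I) (hBμ : P.Benef da μ = B) (hBμ' : P.Benef da μ' = B)
    (houtμ : ∀ i, i ∉ B → μ i = da i) (houtμ' : ∀ i, i ∉ B → μ' i = da i)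
    (hwd : P.WeakDom μ' μ) :
    ∃ σ : Equiv.Perm I, (∀ i, i ∉ B → σ i = i) ∧ (∀ i, μ' i = μ (σ i)) ∧
      (∀ i, P.rank i (μ (σ i)) ≤ P.rank i (μ i)) := by
  classical
  obtain ⟨hmatch, hir, hnw, _⟩ := hda
  -- Key lemma: any beneficiary's school under ν is some school held by a B-member under da
  have key : ∀ (ν : I → Option S), P.IsMatching ν → P.WeakDom ν da →
      P.Benef da ν = B → (∀ i, i ∉ B → ν i = da i) →
      ∀ i ∈ B, ∃ j ∈ B, ∃ s, da j = some s ∧ ν i = some s := by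
    intro ν hνm _hνw hνB hνout i hi
    have hiB : P.rank i (ν i) < P.rank i (da i) := by
      rw [← hνB] at hi; exact hi
    obtain ⟨s, hs⟩ : ∃ s, ν i = some s := by
      cases h : ν i with
      | none =>
        rw [h] at hiB
        exact absurd hiB (not_lt.2 (hir i))
      | some s => exact ⟨s, rfl⟩
    rw [hs] at hiB
    obtain ⟨j, hj⟩ : ∃ j, da j = some s := by
      by_contra hno
      push_neg at hno
      exact absurd (hnw s hno i) (not_le.2 hiB)
    have hjB : j ∈ B := by
      by_contra hjB
      have : ν j = some s := by rw [hνout j hjB, hj]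
      have := hνm i j s hs this
      subst this
      exact hjB hi
    exact ⟨j, hjB, s, hj, hs⟩
  have keyμ := key μ hm hd.1 hBμ houtμ
  have keyμ' := key μ' hm' hd'.1 hBμ' houtμ'
  -- the map g : B → B with da (g i) = μ i
  let g : B → B := fun i => ⟨(keyμ i i.2).choose, (keyμ i i.2).choose_spec.1⟩
  have hg : ∀ i : B, da (g i : I) = μ (i : I) := by
    intro i
    obtain ⟨s, h1, h2⟩ := (keyμ i i.2).choose_spec.2
    rw [h1, h2]
  have hμsome : ∀ i : B, ∃ s, μ (i : I) = some s := by
    intro i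
    obtain ⟨s, _, h2⟩ := (keyμ i i.2).choose_spec.2
    exact ⟨s, h2⟩
  have hμ'some : ∀ i : B, ∃ s, μ' (i : I) = some s := by
    intro i
    obtain ⟨s, _, h2⟩ := (keyμ' i i.2).choose_spec.2
    exact ⟨s, h2⟩
  have hginj : Function.Injective g := by
    intro i j hij
    obtain ⟨s, hs⟩ := hμsome i
    have h2 : μ (j : I) = some s := by
      rw [← hg j, ← hij, hg i, hs]
    exact Subtype.ext (hm i j s hs h2)
  have hgsurj : Function.Surjective g := Finite.injective_iff_surjective.1 hginj
  -- for each i ∈ B there is j ∈ B with μ j = μ' i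
  have exτ : ∀ i : B, ∃ j : B, μ (j : I) = μ' (i : I) := by
    intro i
    obtain ⟨k, hkB, s, hdak, hs⟩ := keyμ' i i.2
    obtain ⟨j, hj⟩ := hgsurj ⟨k, hkB⟩
    refine ⟨j, ?_⟩
    rw [← hg j, hj, hs, hdak]
  -- the permutation
  let f : I → I := fun i => if h : i ∈ B then ((exτ ⟨i, h⟩).choose : I) else i
  have hf : ∀ i (h : i ∈ B), μ (f i) = μ' i := by
    intro i h
    simp only [f, dif_pos h]
    exact (exτ ⟨i, h⟩).choose_spec
  have hfB : ∀ i (h : i ∈ B), f i ∈ B := by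
    intro i h
    simp only [f, dif_pos h]
    exact ((exτ ⟨i, h⟩).choose).2
  have hfout : ∀ i, i ∉ B → f i = i := by
    intro i h; simp only [f, dif_neg h]
  have hfinj : Function.Injective f := by
    intro i j hij
    by_cases hi : i ∈ B <;> by_cases hj : j ∈ B
    · obtain ⟨s, hs⟩ := hμ'some ⟨i, hi⟩
      have h2 : μ' j = some s := by
        rw [← hf j hj, ← hij, hf i hi, hs]
      exact hm' i j s hs h2
    · exact absurd (hij ▸ hfB i hi) (by rw [hfout j hj]; exact hj)
    · exact absurd ((hij.symm) ▸ hfB j hj) (by rw [hfout i hi]; exact hi)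
    · rw [hfout i hi, hfout j hj] at hij; exact hij
  refine ⟨Equiv.ofBijective f (Finite.injective_iff_bijective.1 hfinj), ?_, ?_, ?_⟩
  · intro i hi
    exact hfout i hi
  · intro i
    by_cases h : i ∈ B
    · exact (hf i h).symm
    · rw [show (Equiv.ofBijective f (Finite.injective_iff_bijective.1 hfinj)) i = f i from rfl,
        hfout i h, houtμ' i h, houtμ i h]
  · intro i
    by_cases h : i ∈ B
    · rw [show (Equiv.ofBijective f (Finite.injective_iff_bijective.1 hfinj)) i = f i from rfl,
        hf i h]
      exact hwd i
    · rw [show (Equiv.ofBijective f (Finite.injective_iff_bijective.1 hfinj)) i = f i from rfl,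
        hfout i h]
end

section
/- There is no consent-based mechanism M that weakly Pareto-dominates DA and simultaneously (i) is efficient whenever possible, (ii) is constrained efficient, and (iii) incentivizes consent. Concretely, in the seven-student problem of Example ex:running, the requirements imposed by M on the consent sets W1 = {i7}, W2 = {i5, i7}, and W3 = {i1, i5, i7} are mutually inconsistent. -/
/-- Preference lists of the seven students of Example `ex:running` (0-indexed:
student `k` = i_{k+1}, school `k` = s_{k+1}). -/
def prefList7 : Fin 7 → List (Fin 7)
  | 0 => [5, 3, 1, 2, 4, 0]
  | 1 => [0, 1]
  | 2 => [5, 2]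
  | 3 => [4, 3]
  | 4 => [2, 5, 3, 0, 4]
  | 5 => [3, 5]
  | 6 => [3, 6]

/-- Priority lists of the seven schools of Example `ex:running`. -/
def prioList7 : Fin 7 → List (Fin 7)
  | 0 => [0, 4, 1]
  | 1 => [1, 0]
  | 2 => [2, 4, 0]
  | 3 => [3, 6, 0, 5, 4]
  | 4 => [4, 3, 0]
  | 5 => [5, 2, 4, 0]
  | 6 => []

def rank7 (i : Fin 7) (o : Option (Fin 7)) : ℕ :=
  match o with
  | none => 9
  | some s => if s ∈ prefList7 i then (prefList7 i).idxOf s else 10 + s.val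

def prio7 (s : Fin 7) (i : Fin 7) : ℕ :=
  if i ∈ prioList7 s then (prioList7 s).idxOf i else 10 + i.val

/-- The school choice problem of Example `ex:running`. -/
def P7 : SchoolChoice (Fin 7) (Fin 7) where
  rank := rank7
  rank_inj := by decide
  prio := prio7
  prio_inj := by decide

/-- The DA outcome of Example `ex:running`: each student `i_k` is assigned `s_k`. -/
def da7 : Fin 7 → Option (Fin 7) := fun k => some k


namespace Stmt15Aux

instance (μ : Fin 7 → Option (Fin 7)) : Decidable (P7.IsMatching μ) := by
  unfold SchoolChoice.IsMatching; infer_instance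
instance (μ : Fin 7 → Option (Fin 7)) (h : Fin 7) : Decidable (P7.Violates μ h) := by
  unfold SchoolChoice.Violates; infer_instance
instance (μ ν : Fin 7 → Option (Fin 7)) : Decidable (P7.WeakDom μ ν) := by
  unfold SchoolChoice.WeakDom; infer_instance
instance (μ ν : Fin 7 → Option (Fin 7)) : Decidable (P7.Dom μ ν) := by
  unfold SchoolChoice.Dom SchoolChoice.WeakDom; infer_instance

def optL : Fin 7 → List (Option (Fin 7))
  | 0 => [some 5, some 3, some 1, some 2, some 4, some 0]
  | 1 => [some 0, some 1]
  | 2 => [some 5, some 2]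
  | 3 => [some 4, some 3]
  | 4 => [some 2, some 5, some 3, some 0, some 4]
  | 5 => [some 3, some 5]
  | 6 => [some 3, some 6]

lemma mem_optL : ∀ (i : Fin 7) (o : Option (Fin 7)),
    rank7 i o ≤ rank7 i (some i) → o ∈ optL i := by decide

def muA : Fin 7 → Option (Fin 7) := ![some 3, some 1, some 2, some 4, some 0, some 5, some 6]

def muC : Fin 7 → Option (Fin 7) := ![some 1, some 0, some 5, some 4, some 2, some 3, some 6]

def nuA : Fin 7 → Option (Fin 7) := ![some 5, some 1, some 2, some 4, some 0, some 3, some 6]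

lemma fn_eq (ν : Fin 7 → Option (Fin 7)) :
    ν = ![ν 0, ν 1, ν 2, ν 3, ν 4, ν 5, ν 6] := by
  funext i; fin_cases i <;> rfl

set_option maxHeartbeats 4000000 in
lemma key1 : ∀ a ∈ optL 0, ∀ b ∈ optL 1, ∀ c ∈ optL 2, ∀ d ∈ optL 3,
    ∀ e ∈ optL 4, ∀ f ∈ optL 5, ∀ g ∈ optL 6,
    P7.IsMatching ![a,b,c,d,e,f,g] →
    (∀ h : Fin 7, h ≠ 6 → ¬ P7.Violates ![a,b,c,d,e,f,g] h) →
    ![a,b,c,d,e,f,g] = muA ∨ P7.Dom muA ![a,b,c,d,e,f,g] := by decide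

set_option maxHeartbeats 4000000 in
lemma key2 : ∀ a ∈ optL 0, ∀ b ∈ optL 1, ∀ c ∈ optL 2, ∀ d ∈ optL 3,
    ∀ e ∈ optL 4, ∀ f ∈ optL 5, ∀ g ∈ optL 6,
    P7.IsMatching ![a,b,c,d,e,f,g] →
    (∀ h : Fin 7, h ≠ 4 → h ≠ 6 → ¬ P7.Violates ![a,b,c,d,e,f,g] h) →
    rank7 4 e ≤ 3 →
    ![a,b,c,d,e,f,g] = muA := by decide

set_option maxHeartbeats 4000000 in
lemma key3 : ∀ a ∈ optL 0, ∀ b ∈ optL 1, ∀ c ∈ optL 2, ∀ d ∈ optL 3,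
    ∀ e ∈ optL 4, ∀ f ∈ optL 5, ∀ g ∈ optL 6,
    P7.IsMatching ![a,b,c,d,e,f,g] →
    (∀ h : Fin 7, h ≠ 0 → h ≠ 4 → h ≠ 6 → ¬ P7.Violates ![a,b,c,d,e,f,g] h) →
    rank7 0 a ≤ 1 →
    ![a,b,c,d,e,f,g] = muA := by decide

def optC : Fin 7 → List (Option (Fin 7))
  | 0 => [some 5, some 3, some 1]
  | 1 => [some 0]
  | 2 => [some 5]
  | 3 => [some 4]
  | 4 => [some 2]
  | 5 => [some 3]
  | 6 => [some 3, some 6]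

lemma mem_optC : ∀ (i : Fin 7) (o : Option (Fin 7)),
    rank7 i o ≤ rank7 i (muC i) → o ∈ optC i := by decide

set_option synthInstance.maxSize 1024 in
set_option maxHeartbeats 4000000 in
lemma keyC : ∀ a ∈ optC 0, ∀ b ∈ optC 1, ∀ c ∈ optC 2, ∀ d ∈ optC 3,
    ∀ e ∈ optC 4, ∀ f ∈ optC 5, ∀ g ∈ optC 6,
    P7.IsMatching ![a,b,c,d,e,f,g] →
    ¬ P7.Dom ![a,b,c,d,e,f,g] muC := by decide

lemma paretoC : P7.ParetoEfficient muC := by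
  intro ν hm hd
  have hw := hd.1
  have hmem : ∀ i : Fin 7, ν i ∈ optC i := fun i => mem_optC i (ν i) (hw i)
  have he := fn_eq ν
  rw [he] at hm hd
  exact keyC _ (hmem 0) _ (hmem 1) _ (hmem 2) _ (hmem 3) _ (hmem 4) _ (hmem 5)
    _ (hmem 6) hm hd

lemma matchC : P7.IsMatching muC := by decide
lemma respC : ∀ h : Fin 7, h ≠ 0 → h ≠ 4 → h ≠ 6 → ¬ P7.Violates muC h := by decide
lemma domC : P7.Dom muC da7 := by decide
lemma matchA : P7.IsMatching muA := by decide
lemma respA : ∀ h : Fin 7, h ≠ 6 → ¬ P7.Violates muA h := by decide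
lemma matchN : P7.IsMatching nuA := by decide
lemma domN : P7.Dom nuA muA := by decide

end Stmt15Aux

/-- in the problem of Example `ex:running` there is no consent-based
mechanism `M` (a map from consent sets to matchings respecting the priorities of
non-consenters) that weakly Pareto-dominates DA and simultaneously incentivizes
consent, is constrained efficient, and is efficient whenever possible. -/
theorem stmt15 : ¬ ∃ M : Set (Fin 7) → (Fin 7 → Option (Fin 7)),
    (∀ W, P7.IsMatching (M W)) ∧
    (∀ W h, h ∉ W → ¬ P7.Violates (M W) h) ∧
    (∀ W, P7.WeakDom (M W) da7) ∧
    (∀ W i, P7.rank i (M (insert i W) i) ≤ P7.rank i (M W i)) ∧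
    (∀ W, ¬ ∃ ν, P7.IsMatching ν ∧ (∀ h, h ∉ W → ¬ P7.Violates ν h) ∧
        P7.Dom ν (M W)) ∧
    (∀ W, (∃ ν, P7.IsMatching ν ∧ (∀ h, h ∉ W → ¬ P7.Violates ν h) ∧
        P7.ParetoEfficient ν ∧ P7.Dom ν da7) →
      P7.ParetoEfficient (M W) ∧ P7.Dom (M W) da7) := by

  rintro ⟨M, hMatch, hResp, hWD, hInc, hCE, hEWP⟩
  classical
  set W1 : Set (Fin 7) := {6} with hW1
  set W2 : Set (Fin 7) := insert 4 W1 with hW2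
  set W3 : Set (Fin 7) := insert 0 W2 with hW3
  -- Step 1: M W1 = muA
  have hmemf : ∀ (W : Set (Fin 7)) (i : Fin 7), M W i ∈ Stmt15Aux.optL i := by
    intro W i
    exact Stmt15Aux.mem_optL i (M W i) (hWD W i)
  have hresp1 : ∀ h : Fin 7, h ≠ 6 → ¬ P7.Violates (M W1) h := by
    intro h hh
    exact hResp W1 h (by simpa [hW1] using hh)
  have h1 : M W1 = Stmt15Aux.muA := by
    have heq := Stmt15Aux.fn_eq (M W1)
    have := Stmt15Aux.key1 _ (hmemf W1 0) _ (hmemf W1 1) _ (hmemf W1 2)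
      _ (hmemf W1 3) _ (hmemf W1 4) _ (hmemf W1 5) _ (hmemf W1 6)
      (by rw [← heq]; exact hMatch W1) (by rw [← heq]; exact hresp1)
    rw [← heq] at this
    rcases this with h | h
    · exact h
    · exact absurd ⟨Stmt15Aux.muA, Stmt15Aux.matchA,
        (fun h hh => Stmt15Aux.respA h (by simpa [hW1] using hh)), h⟩ (hCE W1)
  -- Step 2: incentive for student 4, then M W2 = muA
  have hinc4 : P7.rank 4 (M W2 4) ≤ 3 := by
    have := hInc W1 4
    rw [← hW2, h1] at this
    exact le_trans this (by decide)
  have h2 : M W2 = Stmt15Aux.muA := by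
    have heq := Stmt15Aux.fn_eq (M W2)
    have hresp2 : ∀ h : Fin 7, h ≠ 4 → h ≠ 6 → ¬ P7.Violates (M W2) h := by
      intro h h4 h6
      exact hResp W2 h (by simp [hW2, hW1, h4, h6])
    have := Stmt15Aux.key2 _ (hmemf W2 0) _ (hmemf W2 1) _ (hmemf W2 2)
      _ (hmemf W2 3) _ (hmemf W2 4) _ (hmemf W2 5) _ (hmemf W2 6)
      (by rw [← heq]; exact hMatch W2) (by rw [← heq]; exact hresp2) hinc4
    rw [← heq] at this
    exact this
  -- Step 3: incentive for student 0, then M W3 = muA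
  have hinc0 : P7.rank 0 (M W3 0) ≤ 1 := by
    have := hInc W2 0
    rw [← hW3, h2] at this
    exact le_trans this (by decide)
  have h3 : M W3 = Stmt15Aux.muA := by
    have heq := Stmt15Aux.fn_eq (M W3)
    have hresp3 : ∀ h : Fin 7, h ≠ 0 → h ≠ 4 → h ≠ 6 → ¬ P7.Violates (M W3) h := by
      intro h h0 h4 h6
      exact hResp W3 h (by simp [hW3, hW2, hW1, h0, h4, h6])
    have := Stmt15Aux.key3 _ (hmemf W3 0) _ (hmemf W3 1) _ (hmemf W3 2)
      _ (hmemf W3 3) _ (hmemf W3 4) _ (hmemf W3 5) _ (hmemf W3 6)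
      (by rw [← heq]; exact hMatch W3) (by rw [← heq]; exact hresp3) hinc0
    rw [← heq] at this
    exact this
  -- Step 4: efficiency whenever possible at W3 contradicts muA
  have hEW := hEWP W3 ⟨Stmt15Aux.muC, Stmt15Aux.matchC,
    (fun h hh => Stmt15Aux.respC h
      (by simp [hW3, hW2, hW1] at hh; exact hh.1)
      (by simp [hW3, hW2, hW1] at hh; exact hh.2.1)
      (by simp [hW3, hW2, hW1] at hh; exact hh.2.2)),
    Stmt15Aux.paretoC, Stmt15Aux.domC⟩
  have hpe := hEW.1
  rw [h3] at hpe
  exact hpe Stmt15Aux.nuA Stmt15Aux.matchN Stmt15Aux.domN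
end
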